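/- arXiv:1707.00900 — 8 statements merged into one kernel-verified Lean document; each statement's English description precedes it below -/
import Mathlib

section
/- Let f(x) be a formal power series with f(0) = 1, let c(x) = (f(x) - f(x)⁻¹)/2, and let g(x) with g(0) = ±1 be such that c(x·g(x)) = -c(x). Then f(x·g(x)) = f(x)⁻¹. -/
/-!
Since `2c = f - f⁻¹`, the series `f` is a root of `T² - 2cT - 1`. Substituting `X·g` is a ring
homomorphism sending `c` to `-c`, so `F = f(X·g)` is a root of
`T² + 2cT - 1 = (T + f)(T - f⁻¹)`. As `F + f` has constant term `2`, it follows that `F = f⁻¹`.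
-/

open PowerSeries

/-- Substitution of the power series `g` (with zero constant term) into `f`. -/
noncomputable def pscomp (f g : PowerSeries ℚ) : PowerSeries ℚ :=
  PowerSeries.mk fun N => ∑ n ∈ Finset.range (N + 1), coeff n f * coeff N (g ^ n)

lemma PowerSeries.coeff_pow_eq_zero_of_constantCoeff_eq_zero {R : Type*} [CommSemiring R]
    {a : R⟦X⟧} (ha : constantCoeff a = 0) {n d : ℕ} (hnd : n < d) : coeff n (a ^ d) = 0 :=
  coeff_of_lt_order _ <|
    (Nat.cast_lt.mpr hnd).trans_le (le_order_pow_of_constantCoeff_eq_zero d ha)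

lemma pscomp_eq_subst (f : ℚ⟦X⟧) {a : ℚ⟦X⟧} (ha : constantCoeff a = 0) :
    pscomp f a = f.subst a := by
  ext N
  rw [coeff_subst' (HasSubst.of_constantCoeff_zero' ha), pscomp, coeff_mk,
    finsum_eq_sum_of_support_subset (s := Finset.range (N + 1))]
  · simp only [smul_eq_mul]
  · intro d hd
    by_contra hdN
    simp only [Finset.coe_range, Set.mem_Iio, not_lt] at hdN
    exact hd (by simp [coeff_pow_eq_zero_of_constantCoeff_eq_zero ha hdN])

lemma constantCoeff_pscomp (f a : ℚ⟦X⟧) : constantCoeff (pscomp f a) = constantCoeff f := by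
  rw [← coeff_zero_eq_constantCoeff_apply, ← coeff_zero_eq_constantCoeff_apply]
  simp [pscomp]

lemma eq_of_mul_eq_one_of_sq_add_mul_eq_one {R : Type*} [CommRing R] [IsDomain R]
    {f u F c : R} (hfu : f * u = 1) (hc : 2 * c = f - u) (hF : F ^ 2 + 2 * c * F = 1)
    (hne : F + f ≠ 0) : F = u := by
  have hfactor : (F + f) * (F - u) = 0 := by linear_combination hF - F * hc - hfu
  exact sub_eq_zero.mp ((mul_eq_zero.mp hfactor).resolve_left hne)

theorem stmt_3_general (f c g : PowerSeries ℚ) (hf : constantCoeff f = 1)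
    (hc : (2 : PowerSeries ℚ) * c = f - f⁻¹)
    (hcomp : pscomp c (X * g) = -c) :
    pscomp f (X * g) = f⁻¹ := by
  have hXg : constantCoeff (X * g) = 0 := by simp
  have hfu : f * f⁻¹ = 1 := PowerSeries.mul_inv_cancel f (by simp [hf])
  have hquad : f ^ 2 - 2 * c * f = 1 := by linear_combination (-f) * hc + hfu
  refine eq_of_mul_eq_one_of_sq_add_mul_eq_one hfu hc ?_ ?_
  · have := congrArg (substAlgHom (R := ℚ) (HasSubst.of_constantCoeff_zero' hXg)) hquad
    simp only [map_sub, map_mul, map_pow, map_ofNat, map_one, coe_substAlgHom] at this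
    rw [← pscomp_eq_subst f hXg, ← pscomp_eq_subst c hXg, hcomp] at this
    linear_combination this
  · intro h
    simpa [constantCoeff_pscomp, hf] using congrArg constantCoeff h

theorem stmt_3 (f c g : PowerSeries ℚ) (hf : constantCoeff f = 1)
    (hc : (2 : PowerSeries ℚ) * c = f - f⁻¹)
    (hg : constantCoeff g = 1 ∨ constantCoeff g = -1)
    (hcomp : pscomp c (X * g) = -c) :
    pscomp f (X * g) = f⁻¹ :=
  stmt_3_general f c g hf hc hcomp
end

section
/- Let E(x) = Σ_{n≥0} (1+φn)^{n-1} xⁿ/n!. Then x·E(x)^φ = x·Σ_{n≥0} (1+n)^{n-1} φⁿ xⁿ/n!, i.e. E(x)^φ = Σ_{n≥0} ((1+n)^{n-1}/n!) (φx)ⁿ. -/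
open Finset

section AbelSection
open Polynomial


/-- Abel term: `a*(a+k*z)^(k-1)`, with the `k = 0` value taken to be `1`. -/
noncomputable def abelT (z a : ℚ) (k : ℕ) : ℚ := if k = 0 then 1 else a * (a + k * z) ^ (k - 1)

@[simp] lemma abelT_zero (z a : ℚ) : abelT z a 0 = 1 := rfl

lemma abelT_succ (z a : ℚ) (k : ℕ) : abelT z a (k+1) = a * (a + (k+1) * z) ^ k := by
  simp [abelT]

noncomputable def altS (n j : ℕ) : ℚ :=
  ∑ k ∈ range (n+1), (-1:ℚ)^k * (n.choose k : ℚ) * (k:ℚ)^j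

lemma altS_eq_zero : ∀ n : ℕ, ∀ j < n, altS n j = 0 := by
  intro n
  induction n with
  | zero => intro j hj; omega
  | succ n ih =>
    intro j hj
    have key : altS (n+1) j = altS n j - ∑ t ∈ range (j+1), (j.choose t : ℚ) * altS n t := by
      have e1 : altS (n+1) j
          = (∑ i ∈ range (n+1),
              (-1:ℚ)^(i+1) * ((n.choose i : ℚ) + (n.choose (i+1) : ℚ)) * ((i:ℚ)+1)^j)
            + (0:ℚ)^j := by
        rw [altS, Finset.sum_range_succ']
        congr 1
        · apply Finset.sum_congr rfl; intro i _
          rw [Nat.choose_succ_succ]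
          push_cast
          ring
        · simp
      have e2 : ∑ i ∈ range (n+1),
            (-1:ℚ)^(i+1) * ((n.choose i : ℚ) + (n.choose (i+1) : ℚ)) * ((i:ℚ)+1)^j
          = (- ∑ i ∈ range (n+1), (-1:ℚ)^i * (n.choose i : ℚ) * ((i:ℚ)+1)^j)
            + ∑ i ∈ range (n+1), (-1:ℚ)^(i+1) * (n.choose (i+1) : ℚ) * ((i:ℚ)+1)^j := by
        rw [← Finset.sum_neg_distrib, ← Finset.sum_add_distrib]
        apply Finset.sum_congr rfl; intro i _; ring
      have e3 : ∑ i ∈ range (n+1), (-1:ℚ)^(i+1) * (n.choose (i+1) : ℚ) * ((i:ℚ)+1)^j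
          = altS n j - (0:ℚ)^j := by
        have h4 := Finset.sum_range_succ'
          (fun k => (-1:ℚ)^k * (n.choose k : ℚ) * (k:ℚ)^j) (n+1)
        have h5 : ∑ k ∈ range (n+1+1), (-1:ℚ)^k * (n.choose k : ℚ) * (k:ℚ)^j = altS n j := by
          rw [Finset.sum_range_succ, altS]
          simp [Nat.choose_succ_self]
        rw [h5] at h4
        have h6 : ∀ i : ℕ, ((i+1 : ℕ) : ℚ) = (i:ℚ)+1 := by intro i; push_cast; ring
        simp only [h6] at h4
        simp only [Nat.cast_zero, pow_zero, Nat.choose_zero_right, Nat.cast_one, one_mul] at h4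
        linarith [h4]
      have e4 : ∑ i ∈ range (n+1), (-1:ℚ)^i * (n.choose i : ℚ) * ((i:ℚ)+1)^j
          = ∑ t ∈ range (j+1), (j.choose t : ℚ) * altS n t := by
        have hb : ∀ i : ℕ, ((i:ℚ)+1)^j = ∑ t ∈ range (j+1), (i:ℚ)^t * (j.choose t : ℚ) := by
          intro i
          rw [add_pow]
          apply Finset.sum_congr rfl; intro t _; simp
        simp only [hb, Finset.mul_sum]
        rw [Finset.sum_comm]
        apply Finset.sum_congr rfl; intro t _
        rw [altS, Finset.mul_sum]
        apply Finset.sum_congr rfl; intro i _; ring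
      rw [e1, e2, e3, e4]; ring
    rw [key]
    have hjn : j ≤ n := by omega
    have h0 : altS n j = 0 ∨ j = n := by
      rcases lt_or_eq_of_le hjn with h | h
      · exact Or.inl (ih j h)
      · exact Or.inr h
    rw [Finset.sum_range_succ, Nat.choose_self]
    have hz : ∀ t ∈ range j, (j.choose t : ℚ) * altS n t = 0 := by
      intro t ht
      rw [mem_range] at ht
      rw [ih t (by omega)]
      ring
    rw [Finset.sum_congr rfl hz]
    simp


lemma altS_eq_zero' (n : ℕ) : ∀ j < n, (∑ k ∈ range (n+1), (-1:ℚ)^k * (n.choose k : ℚ) * (k:ℚ)^j) = 0 := by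
  intro j hj
  exact altS_eq_zero n j hj

lemma choose_sub_mul (n k : ℕ) (hk : k ≤ n) :
    ((n+1).choose k : ℚ) * ((n+1-k : ℕ) : ℚ) = ((n:ℚ)+1) * (n.choose k : ℚ) := by
  rw [Nat.cast_choose ℚ (hk.trans (Nat.le_succ n)), Nat.cast_choose ℚ hk]
  have h1 : n+1-k = (n-k)+1 := by omega
  rw [h1]
  have h2 : (n+1).factorial = (n+1) * n.factorial := rfl
  have h3 : ((n-k)+1).factorial = ((n-k)+1) * (n-k).factorial := rfl
  rw [h2, h3]
  have f1 : ((k.factorial : ℚ)) ≠ 0 := Nat.cast_ne_zero.mpr (Nat.factorial_ne_zero k)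
  have f2 : (((n-k).factorial : ℚ)) ≠ 0 := Nat.cast_ne_zero.mpr (Nat.factorial_ne_zero _)
  have f3 : ((n:ℚ) - (k:ℚ) + 1) ≠ 0 := by
    have hkn : (k:ℚ) ≤ (n:ℚ) := Nat.cast_le.mpr hk
    intro habs; linarith
  push_cast
  field_simp

lemma ab1 (z a : ℚ) (n : ℕ) :
    ∑ k ∈ range (n+1), Polynomial.C ((n.choose k : ℚ) * abelT z a k) *
        (Polynomial.X - Polynomial.C ((k:ℚ)*z))^(n-k)
      = (Polynomial.X + Polynomial.C a)^n := by
  induction n with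
  | zero => simp [abelT]
  | succ n ih =>
    set p : Polynomial ℚ := ∑ k ∈ range (n+1+1), Polynomial.C (((n+1).choose k : ℚ) * abelT z a k) *
        (Polynomial.X - Polynomial.C ((k:ℚ)*z))^(n+1-k) with hp
    set g : Polynomial ℚ := (Polynomial.X + Polynomial.C a)^(n+1) with hg
    -- derivatives agree
    have hder : derivative p = derivative g := by
      have hL : derivative p = Polynomial.C ((n:ℚ)+1) *
          ∑ k ∈ range (n+1), Polynomial.C ((n.choose k : ℚ) * abelT z a k) *
            (Polynomial.X - Polynomial.C ((k:ℚ)*z))^(n-k) := by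
        rw [hp, derivative_sum]
        rw [Finset.mul_sum, Finset.sum_range_succ]
        have hlast : derivative (Polynomial.C (((n+1).choose (n+1) : ℚ) * abelT z a (n+1)) *
            (Polynomial.X - Polynomial.C (((n+1:ℕ):ℚ)*z))^(n+1-(n+1))) = 0 := by
          simp
        rw [hlast, add_zero]
        apply Finset.sum_congr rfl
        intro k hk
        rw [mem_range] at hk
        rw [derivative_C_mul, derivative_X_sub_C_pow]
        have he : n+1-k-1 = n-k := by omega
        rw [he]
        rw [← mul_assoc, ← Polynomial.C_mul, ← mul_assoc, ← Polynomial.C_mul]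
        congr 1
        rw [Polynomial.C_inj]
        have hc := choose_sub_mul n k (by omega)
        linear_combination abelT z a k * hc
      have hR : derivative g = Polynomial.C ((n:ℚ)+1) * (Polynomial.X + Polynomial.C a)^n := by
        rw [hg, derivative_pow, derivative_X_add_C]
        push_cast
        ring
      rw [hL, hR, ih]
    -- difference is a constant
    have hd0 : derivative (p - g) = 0 := by rw [derivative_sub, hder, sub_self]
    have hdeg : (p - g).natDegree = 0 := Polynomial.natDegree_eq_zero_of_derivative_eq_zero hd0
    obtain ⟨c, hc⟩ := Polynomial.natDegree_eq_zero.mp hdeg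
    -- evaluate at -a
    have hsgn : ∀ k ≤ n+1, (-1:ℚ)^(n+1-k) = (-1)^(n+1) * (-1)^k := by
      intro k hk
      have h1 : (-1:ℚ)^(n+1-k) * (-1)^k = (-1)^(n+1) := by
        rw [← pow_add]; congr 1; omega
      have h2 : (-1:ℚ)^k * (-1)^k = 1 := by
        rw [← pow_add, ← two_mul, pow_mul]; norm_num
      calc (-1:ℚ)^(n+1-k) = (-1:ℚ)^(n+1-k) * ((-1:ℚ)^k * (-1)^k) := by rw [h2, mul_one]
        _ = ((-1:ℚ)^(n+1-k) * (-1)^k) * (-1)^k := by ring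
        _ = (-1)^(n+1) * (-1)^k := by rw [h1]
    have key : ∑ k ∈ range (n+2), (-1:ℚ)^k * (((n+1).choose k : ℚ)) * (a + (k:ℚ)*z)^n = 0 := by
      have hexp : ∀ k : ℕ, (a + (k:ℚ)*z)^n
          = ∑ t ∈ range (n+1), a^t * ((k:ℚ)^(n-t) * z^(n-t) * (n.choose t : ℚ)) := by
        intro k
        rw [add_pow]
        apply Finset.sum_congr rfl; intro t _
        rw [mul_pow]; ring
      simp only [hexp, Finset.mul_sum]
      rw [Finset.sum_comm]
      apply Finset.sum_eq_zero
      intro t ht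
      rw [mem_range] at ht
      have h0 := altS_eq_zero' (n+1) (n-t) (by omega)
      have : ∑ k ∈ range (n+2), (-1:ℚ)^k * ((n+1).choose k : ℚ) *
            (a^t * ((k:ℚ)^(n-t) * z^(n-t) * (n.choose t:ℚ)))
          = (a^t * z^(n-t) * (n.choose t:ℚ)) *
            ∑ k ∈ range (n+1+1), (-1:ℚ)^k * ((n+1).choose k : ℚ) * (k:ℚ)^(n-t) := by
        rw [Finset.mul_sum]
        apply Finset.sum_congr rfl; intro k _; ring
      rw [this, h0, mul_zero]
    have hpe : p.eval (-a) = 0 := by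
      rw [hp, Polynomial.eval_finset_sum]
      have hterm : ∀ k ∈ range (n+2),
          Polynomial.eval (-a) (Polynomial.C (((n+1).choose k : ℚ) * abelT z a k) *
            (Polynomial.X - Polynomial.C ((k:ℚ)*z))^(n+1-k))
          = a * (-1)^(n+1) * ((-1:ℚ)^k * (((n+1).choose k : ℚ)) * (a + (k:ℚ)*z)^n) := by
        intro k hk
        rw [mem_range] at hk
        rw [Polynomial.eval_mul, Polynomial.eval_C, Polynomial.eval_pow, Polynomial.eval_sub,
          Polynomial.eval_X, Polynomial.eval_C]
        have h1 : (-a - (k:ℚ)*z) = -(a + (k:ℚ)*z) := by ring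
        rw [h1, neg_pow, hsgn k (by omega)]
        cases k with
        | zero =>
          have ha0 : abelT z a 0 = 1 := rfl
          rw [ha0]
          norm_num
          rw [pow_succ]
          ring
        | succ i =>
          have habk : abelT z a (i+1) = a * (a + ((i:ℚ)+1) * z) ^ i := by
            simp [abelT]
          have h3 : n+1-(i+1) = n-i := by omega
          push_cast
          rw [habk]
          have h2 : (a + ((i:ℚ)+1)*z)^i * (a + ((i:ℚ)+1)*z)^(n-i) = (a + ((i:ℚ)+1)*z)^n := by
            rw [← pow_add]; congr 1; omega
          rw [← h2]
          ring
      rw [Finset.sum_congr rfl hterm]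
      have : ∑ k ∈ range (n+2), a * (-1)^(n+1) * ((-1:ℚ)^k * (((n+1).choose k : ℚ)) * (a + (k:ℚ)*z)^n)
          = a * (-1)^(n+1) * ∑ k ∈ range (n+2), (-1:ℚ)^k * (((n+1).choose k : ℚ)) * (a + (k:ℚ)*z)^n := by
        rw [Finset.mul_sum]
      rw [this, key, mul_zero]
    have hge : g.eval (-a) = 0 := by
      rw [hg]; simp
    have hc0 : c = 0 := by
      have := congrArg (Polynomial.eval (-a)) hc
      rw [Polynomial.eval_C, Polynomial.eval_sub, hpe, hge, sub_zero] at this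
      exact this
    have : p - g = 0 := by rw [← hc, hc0, map_zero]
    have := sub_eq_zero.mp this
    exact this



lemma ab2 (z a b : ℚ) (n : ℕ) :
    ∑ k ∈ range (n+1), (n.choose k : ℚ) * abelT z a k * (b + ((n-k : ℕ):ℚ)*z)^(n-k)
      = (a + b + (n:ℚ)*z)^n := by
  have h := congrArg (Polynomial.eval (b + (n:ℚ)*z)) (ab1 z a n)
  rw [Polynomial.eval_finset_sum, Polynomial.eval_pow, Polynomial.eval_add, Polynomial.eval_X,
    Polynomial.eval_C] at h
  have h2 : ∀ k ∈ range (n+1),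
      Polynomial.eval (b + (n:ℚ)*z) (Polynomial.C ((n.choose k : ℚ) * abelT z a k) *
        (Polynomial.X - Polynomial.C ((k:ℚ)*z))^(n-k))
      = (n.choose k : ℚ) * abelT z a k * (b + ((n-k : ℕ):ℚ)*z)^(n-k) := by
    intro k hk
    rw [mem_range] at hk
    rw [Polynomial.eval_mul, Polynomial.eval_C, Polynomial.eval_pow, Polynomial.eval_sub,
      Polynomial.eval_X, Polynomial.eval_C]
    congr 2
    rw [Nat.cast_sub (by omega : k ≤ n)]
    ring
  rw [Finset.sum_congr rfl h2] at h
  rw [h]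
  ring

lemma abT (z a b : ℚ) (n : ℕ) :
    ∑ k ∈ range (n+1), (n.choose k : ℚ) * abelT z b (n-k) * abelT z a k
      = abelT z (a+b) n := by
  cases n with
  | zero => simp [abelT]
  | succ m =>
    have hU := ab2 z a b (m+1)
    have hU' := ab2 z a (b+z) m
    have hterm : ∀ k ∈ range (m+1),
        ((m+1).choose k : ℚ) * abelT z a k * (b + (((m+1)-k:ℕ):ℚ)*z)^((m+1)-k)
        = ((m+1).choose k : ℚ) * abelT z b ((m+1)-k) * abelT z a k
          + (((m:ℚ)+1)*z) * ((m.choose k : ℚ) * abelT z a k * ((b+z) + ((m-k:ℕ):ℚ)*z)^(m-k)) := by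
      intro k hk
      rw [mem_range] at hk
      have hkm : k ≤ m := by omega
      have e1 : (m+1)-k = (m-k)+1 := by omega
      have e2 : (((m+1)-k:ℕ):ℚ) = ((m-k:ℕ):ℚ) + 1 := by rw [e1]; push_cast; ring
      have habb : abelT z b ((m-k)+1) = b * (b + (((m-k:ℕ):ℚ)+1) * z)^(m-k) := by
        rw [abelT]
        simp only [Nat.succ_ne_zero, if_false, Nat.add_sub_cancel]
        push_cast
        ring_nf
      have hc := choose_sub_mul m k hkm
      rw [e2] at hc
      rw [e1, habb]
      rw [show (((m-k)+1:ℕ):ℚ) = ((m-k:ℕ):ℚ)+1 by push_cast; ring]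
      rw [pow_succ]
      have e4 : ((b+z) + ((m-k:ℕ):ℚ)*z) = (b + (((m-k:ℕ):ℚ)+1)*z) := by ring
      rw [e4]
      linear_combination (abelT z a k * (b + (((m-k:ℕ):ℚ)+1)*z)^(m-k) * z) * hc
    have hlast : ((m+1).choose (m+1) : ℚ) * abelT z a (m+1) * (b + ((((m+1)-(m+1)):ℕ):ℚ)*z)^((m+1)-(m+1))
        = ((m+1).choose (m+1) : ℚ) * abelT z b ((m+1)-(m+1)) * abelT z a (m+1) := by
      simp [abelT]
    have h1 : ∑ k ∈ range (m+1+1), ((m+1).choose k : ℚ) * abelT z a k * (b + (((m+1)-k:ℕ):ℚ)*z)^((m+1)-k)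
        = (∑ k ∈ range (m+1+1), ((m+1).choose k : ℚ) * abelT z b ((m+1)-k) * abelT z a k)
          + (((m:ℚ)+1)*z) *
            ∑ k ∈ range (m+1), (m.choose k : ℚ) * abelT z a k * ((b+z) + ((m-k:ℕ):ℚ)*z)^(m-k) := by
      rw [Finset.sum_range_succ, Finset.sum_range_succ
        (fun k => ((m+1).choose k : ℚ) * abelT z b ((m+1)-k) * abelT z a k)]
      rw [Finset.sum_congr rfl hterm, Finset.sum_add_distrib, hlast, Finset.mul_sum]
      ring
    rw [hU, hU'] at h1
    -- now conclude
    have hab : abelT z (a+b) (m+1) = (a+b) * ((a+b) + ((m:ℚ)+1)*z)^m := by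
      rw [abelT]
      simp only [Nat.succ_ne_zero, if_false, Nat.add_sub_cancel]
      push_cast
      ring_nf
    rw [hab]
    have hx : a + (b+z) + (m:ℚ)*z = a + b + ((m:ℚ)+1)*z := by ring
    rw [hx] at h1
    have hy : a + b + ((m+1:ℕ):ℚ)*z = a + b + ((m:ℚ)+1)*z := by push_cast; ring
    rw [hy] at h1
    have hz' : (a + b + ((m:ℚ)+1)*z)^(m+1) = (a + b + ((m:ℚ)+1)*z)^m * (a + b + ((m:ℚ)+1)*z) := pow_succ _ _
    rw [hz'] at h1
    linarith [h1]


end AbelSection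

open PowerSeries

lemma coeff_pscomp (f g : PowerSeries ℚ) (N : ℕ) :
    coeff N (pscomp f g) = ∑ n ∈ range (N+1), coeff n f * coeff N (g^n) := by
  rw [pscomp, coeff_mk]

lemma coeff_exp_q (n : ℕ) : coeff n (exp ℚ) = 1 / n.factorial := by
  rw [coeff_exp]
  simp

lemma coeff_pow_zero_of_lt {A : PowerSeries ℚ} (hA : constantCoeff A = 0)
    {j p : ℕ} (h : p < j) : coeff p (A^j) = 0 := by
  have h1 : (X : PowerSeries ℚ)^j ∣ A^j := pow_dvd_pow_of_dvd (X_dvd_iff.mpr hA) j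
  exact X_pow_dvd_iff.mp h1 p h

lemma coeff_mul_pow_zero {A B : PowerSeries ℚ} (hA : constantCoeff A = 0)
    (hB : constantCoeff B = 0) {j k N : ℕ} (h : N < j + k) :
    coeff N (A^j * B^k) = 0 := by
  have h1 : (X : PowerSeries ℚ)^(j+k) ∣ A^j * B^k := by
    rw [pow_add]
    exact mul_dvd_mul (pow_dvd_pow_of_dvd (X_dvd_iff.mpr hA) j)
      (pow_dvd_pow_of_dvd (X_dvd_iff.mpr hB) k)
  exact X_pow_dvd_iff.mp h1 N h

lemma pscomp_exp_add {A B : PowerSeries ℚ} (hA : constantCoeff A = 0)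
    (hB : constantCoeff B = 0) :
    pscomp (exp ℚ) (A+B) = pscomp (exp ℚ) A * pscomp (exp ℚ) B := by
  ext N
  set F : ℕ × ℕ → ℚ := fun jk =>
    (1/(jk.1.factorial : ℚ)) * (1/(jk.2.factorial : ℚ)) * coeff N (A^jk.1 * B^jk.2) with hF
  have hLHS : coeff N (pscomp (exp ℚ) (A+B))
      = ∑ n ∈ range (N+1), ∑ p ∈ Finset.HasAntidiagonal.antidiagonal n, F p := by
    rw [coeff_pscomp]
    apply Finset.sum_congr rfl
    intro n _
    rw [coeff_exp_q, add_pow, map_sum, Finset.Nat.sum_antidiagonal_eq_sum_range_succ_mk,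
      Finset.mul_sum]
    apply Finset.sum_congr rfl
    intro j hj
    rw [mem_range] at hj
    have hcast : (A^j * B^(n-j) * (n.choose j : PowerSeries ℚ)) =
        PowerSeries.C ((n.choose j : ℚ)) * (A^j * B^(n-j)) := by
      rw [← map_natCast (PowerSeries.C (R := ℚ)) (n.choose j)]
      ring
    rw [hcast, coeff_C_mul, hF]
    have hcc : ((n.choose j : ℚ)) = (n.factorial : ℚ) / ((j.factorial : ℚ) * ((n-j).factorial : ℚ)) :=
      Nat.cast_choose ℚ (by omega)
    have f0 : ((n.factorial : ℚ)) ≠ 0 := Nat.cast_ne_zero.mpr (Nat.factorial_ne_zero n)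
    have f1 : ((j.factorial : ℚ)) ≠ 0 := Nat.cast_ne_zero.mpr (Nat.factorial_ne_zero j)
    have f2 : (((n-j).factorial : ℚ)) ≠ 0 := Nat.cast_ne_zero.mpr (Nat.factorial_ne_zero _)
    field_simp [hcc]
    rw [hcc]
    field_simp
  have hdisj : (↑(range (N+1)) : Set ℕ).PairwiseDisjoint Finset.HasAntidiagonal.antidiagonal := by
    intro x _ y _ hxy
    simp only [Function.onFun]
    rw [Finset.disjoint_left]
    intro p hpx hpy
    rw [Finset.HasAntidiagonal.mem_antidiagonal] at hpx hpy
    exact hxy (hpx ▸ hpy ▸ rfl)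
  have hsub : (range (N+1)).biUnion Finset.HasAntidiagonal.antidiagonal ⊆ range (N+1) ×ˢ range (N+1) := by
    intro p hp
    rw [Finset.mem_biUnion] at hp
    obtain ⟨n, hn, hpn⟩ := hp
    rw [mem_range] at hn
    rw [Finset.HasAntidiagonal.mem_antidiagonal] at hpn
    rw [Finset.mem_product, mem_range, mem_range]
    omega
  have hz : ∀ p ∈ range (N+1) ×ˢ range (N+1),
      p ∉ (range (N+1)).biUnion Finset.HasAntidiagonal.antidiagonal → F p = 0 := by
    intro p _ hp
    have hgt : N < p.1 + p.2 := by
      by_contra hle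
      push_neg at hle
      apply hp
      rw [Finset.mem_biUnion]
      exact ⟨p.1 + p.2, by rw [mem_range]; omega, by rw [Finset.HasAntidiagonal.mem_antidiagonal]⟩
    rw [hF]
    simp only
    rw [coeff_mul_pow_zero hA hB hgt, mul_zero]
  have hRHS : coeff N (pscomp (exp ℚ) A * pscomp (exp ℚ) B)
      = ∑ p ∈ range (N+1) ×ˢ range (N+1), F p := by
    rw [PowerSeries.coeff_mul]
    have hfac : ∀ q ∈ Finset.HasAntidiagonal.antidiagonal N,
        coeff q.1 (pscomp (exp ℚ) A) * coeff q.2 (pscomp (exp ℚ) B)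
        = ∑ p ∈ range (N+1) ×ˢ range (N+1),
            ((1/(p.1.factorial:ℚ)) * coeff q.1 (A^p.1)) *
            ((1/(p.2.factorial:ℚ)) * coeff q.2 (B^p.2)) := by
      intro q hq
      rw [Finset.HasAntidiagonal.mem_antidiagonal] at hq
      have hq1 : q.1 ≤ N := by omega
      have hq2 : q.2 ≤ N := by omega
      have e1 : coeff q.1 (pscomp (exp ℚ) A)
          = ∑ j ∈ range (N+1), (1/(j.factorial:ℚ)) * coeff q.1 (A^j) := by
        rw [coeff_pscomp]
        rw [Finset.sum_subset (by intro j hj; rw [mem_range] at *; omega :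
          range (q.1+1) ⊆ range (N+1))]
        · apply Finset.sum_congr rfl; intro j _; rw [coeff_exp_q]
        · intro j _ hj
          rw [mem_range] at hj
          rw [coeff_pow_zero_of_lt hA (by omega), mul_zero]
      have e2 : coeff q.2 (pscomp (exp ℚ) B)
          = ∑ k ∈ range (N+1), (1/(k.factorial:ℚ)) * coeff q.2 (B^k) := by
        rw [coeff_pscomp]
        rw [Finset.sum_subset (by intro j hj; rw [mem_range] at *; omega :
          range (q.2+1) ⊆ range (N+1))]
        · apply Finset.sum_congr rfl; intro j _; rw [coeff_exp_q]
        · intro j _ hj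
          rw [mem_range] at hj
          rw [coeff_pow_zero_of_lt hB (by omega), mul_zero]
      rw [e1, e2, Finset.sum_mul_sum, ← Finset.sum_product']
    rw [Finset.sum_congr rfl hfac, Finset.sum_comm]
    apply Finset.sum_congr rfl
    intro p _
    rw [hF]
    simp only
    rw [PowerSeries.coeff_mul, Finset.mul_sum]
    apply Finset.sum_congr rfl
    intro q _
    ring
  rw [hLHS, hRHS, ← Finset.sum_biUnion hdisj]
  exact Finset.sum_subset hsub hz

lemma pscomp_exp_zero : pscomp (exp ℚ) 0 = 1 := by
  ext N
  rw [coeff_pscomp]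
  rw [Finset.sum_eq_single 0]
  · rw [coeff_exp_q]
    simp
  · intro n _ hn
    rw [zero_pow hn, map_zero, mul_zero]
  · intro habs
    exact absurd (by rw [mem_range]; omega : (0:ℕ) ∈ range (N+1)) habs

lemma pscomp_exp_nat {L : PowerSeries ℚ} (hL0 : constantCoeff L = 0) :
    ∀ m : ℕ, pscomp (exp ℚ) (PowerSeries.C (m:ℚ) * L) = (pscomp (exp ℚ) L)^m := by
  intro m
  induction m with
  | zero => simp [pscomp_exp_zero]
  | succ m ih =>
    have hsplit : PowerSeries.C ((m+1:ℕ):ℚ) * L = PowerSeries.C (m:ℚ) * L + L := by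
      push_cast
      rw [map_add, map_one]
      ring
    rw [hsplit, pscomp_exp_add (by simp [hL0]) hL0, ih, pow_succ]


lemma coeff_E_pow (φ : ℚ) (E : PowerSeries ℚ)
    (hE : E = PowerSeries.mk fun n => (1 + φ * n) ^ (n - 1) / n.factorial) :
    ∀ m n : ℕ, coeff n (E^m) = abelT φ (m:ℚ) n / n.factorial := by
  have hcE : ∀ k : ℕ, coeff k E = abelT φ 1 k / k.factorial := by
    intro k
    rw [hE, coeff_mk]
    cases k with
    | zero => simp [abelT]
    | succ j =>
      have : abelT φ 1 (j+1) = 1 * (1 + ((j:ℚ)+1) * φ) ^ j := by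
        rw [abelT]
        simp only [Nat.succ_ne_zero, if_false, Nat.add_sub_cancel]
        push_cast
        ring_nf
      rw [this]
      push_cast
      ring_nf
  intro m
  induction m with
  | zero =>
    intro n
    rw [pow_zero]
    cases n with
    | zero => simp [abelT]
    | succ j =>
      rw [PowerSeries.coeff_one]
      simp only [Nat.succ_ne_zero, if_false]
      rw [abelT]
      simp only [Nat.succ_ne_zero, if_false]
      push_cast
      ring
  | succ m ih =>
    intro n
    rw [pow_succ, PowerSeries.coeff_mul, Finset.Nat.sum_antidiagonal_eq_sum_range_succ_mk]
    have hstep : ∀ k ∈ range (n+1),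
        coeff k (E^m) * coeff (n-k) E
        = ((n.choose k : ℚ) * abelT φ 1 (n-k) * abelT φ (m:ℚ) k) / n.factorial := by
      intro k hk
      rw [mem_range] at hk
      rw [ih k, hcE (n-k)]
      rw [Nat.cast_choose ℚ (by omega : k ≤ n)]
      have f0 : ((n.factorial : ℚ)) ≠ 0 := Nat.cast_ne_zero.mpr (Nat.factorial_ne_zero n)
      have f1 : ((k.factorial : ℚ)) ≠ 0 := Nat.cast_ne_zero.mpr (Nat.factorial_ne_zero k)
      have f2 : (((n-k).factorial : ℚ)) ≠ 0 := Nat.cast_ne_zero.mpr (Nat.factorial_ne_zero _)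
      field_simp
    rw [Finset.sum_congr rfl hstep, ← Finset.sum_div, abT φ (m:ℚ) 1 n]
    congr 2
    push_cast
    ring

theorem stmt_5 (φ : ℚ) (E L : PowerSeries ℚ)
    (hE : E = PowerSeries.mk fun n => (1 + φ * n) ^ (n - 1) / n.factorial)
    (hL0 : constantCoeff L = 0)
    (hL : pscomp (PowerSeries.exp ℚ) L = E) :
    X * pscomp (PowerSeries.exp ℚ) (C φ * L) =
      X * PowerSeries.mk fun n => (1 + (n : ℚ)) ^ (n - 1) * φ ^ n / n.factorial := by
  suffices hmain : pscomp (PowerSeries.exp ℚ) (C φ * L) =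
      PowerSeries.mk fun n => (1 + (n : ℚ)) ^ (n - 1) * φ ^ n / n.factorial by
    rw [hmain]
  apply PowerSeries.ext
  intro n
  rw [coeff_mk]
  set P : Polynomial ℚ := ∑ k ∈ range (n+1),
    Polynomial.C ((coeff n (L^k)) * (1/(k.factorial:ℚ))) * Polynomial.X^k with hP
  have hPeval : ∀ c : ℚ, P.eval c = coeff n (pscomp (PowerSeries.exp ℚ) (C c * L)) := by
    intro c
    rw [hP, Polynomial.eval_finset_sum, coeff_pscomp]
    apply Finset.sum_congr rfl
    intro k _
    rw [coeff_exp_q]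
    have hck : (C c * L)^k = C (c^k) * L^k := by rw [mul_pow, ← map_pow]
    rw [hck, PowerSeries.coeff_C_mul, Polynomial.eval_mul, Polynomial.eval_C,
      Polynomial.eval_pow, Polynomial.eval_X]
    ring
  set Qp : Polynomial ℚ := Polynomial.C (1/(n.factorial:ℚ)) *
    (if n = 0 then 1 else Polynomial.X * (Polynomial.X + Polynomial.C ((n:ℚ)*φ))^(n-1)) with hQ
  have hQeval : ∀ c : ℚ, Qp.eval c = abelT φ c n / n.factorial := by
    intro c
    cases n with
    | zero => simp [hQ, abelT]
    | succ j =>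
      rw [hQ, if_neg (Nat.succ_ne_zero j)]
      rw [Polynomial.eval_mul, Polynomial.eval_C, Polynomial.eval_mul, Polynomial.eval_X,
        Polynomial.eval_pow, Polynomial.eval_add, Polynomial.eval_X, Polynomial.eval_C]
      rw [abelT]
      simp only [Nat.succ_ne_zero, if_false, Nat.add_sub_cancel]
      have : c + ((j+1:ℕ):ℚ)*φ = c + ((j:ℚ)+1)*φ := by push_cast; ring
      push_cast
      ring
  have hagree : ∀ m : ℕ, P.eval (m:ℚ) = Qp.eval (m:ℚ) := by
    intro m
    rw [hPeval, hQeval, pscomp_exp_nat hL0 m, hL, coeff_E_pow φ E hE m n]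
  have hPQ : P = Qp := by
    apply Polynomial.eq_of_infinite_eval_eq
    have hsub : Set.range (fun m : ℕ => (m:ℚ)) ⊆ {x | Polynomial.eval x P = Polynomial.eval x Qp} := by
      rintro _ ⟨m, rfl⟩
      exact hagree m
    exact Set.Infinite.mono hsub (Set.infinite_range_of_injective Nat.cast_injective)
  have hfin := congrArg (Polynomial.eval φ) hPQ
  rw [hPeval φ, hQeval φ] at hfin
  rw [hfin]
  cases n with
  | zero => simp [abelT]
  | succ j =>
    rw [abelT]
    simp only [Nat.succ_ne_zero, if_false, Nat.add_sub_cancel]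
    have hb : φ + ((j+1:ℕ):ℚ)*φ = φ * ((j:ℚ)+2) := by push_cast; ring
    rw [hb, mul_pow]
    push_cast
    ring
end

section
/- Let g(x) with g(0)=1 satisfy g(x) = 1 + x·g(x)·B(x²·g(x)) for a formal power series B(x) = Σ b_i xⁱ. Writing g_n^{(m)} = [xⁿ] g(x)^m, one has for all n ≥ 1 and m ≥ 1: g_n^{(m)} = b_0·Σ_{i=1}^{m} g_{n-1}^{(i)} + b_1·Σ_{i=2}^{m+1} g_{n-3}^{(i)} + b_2·Σ_{i=3}^{m+2} g_{n-5}^{(i)} + ... + b_p·Σ_{i=p+1}^{m+p} g_{n-1-2p}^{(i)}, where p = ⌊(n-1)/2⌋. -/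
open PowerSeries

/-!
Write `A = B(x²g)`. Since `g - 1 = xAg`, the geometric sum gives
`g^m = 1 + xA(g + g² + ⋯ + gᵐ)`, so `[xⁿ] gᵐ = [x^{n-1}] (A · Σᵢ gⁱ)`. Only the terms `b_k (x²g)ᵏ`
with `2k ≤ n - 1` of `A` contribute to that coefficient, and `b_k (x²g)ᵏ · gⁱ` contributes
`b_k [x^{n-1-2k}] g^{i+k}`, which turns the range `1..m` of `i` into `k+1..m+k`.
-/

open Finset

lemma pow_eq_one_add_mul_sum_pow_of_eq_one_add_mul {R : Type*} [CommRing R] {g c : R}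
    (h : g = 1 + c * g) (m : ℕ) : g ^ m = 1 + c * ∑ i ∈ range m, g ^ (i + 1) := by
  have hg : g - 1 = c * g := by rw [sub_eq_iff_eq_add', ← h]
  rw [← sub_eq_iff_eq_add', ← mul_geom_sum, hg, mul_assoc, mul_sum]
  simp only [pow_succ']

lemma trunc_pscomp_of_X_dvd (f : PowerSeries ℚ) {a : PowerSeries ℚ} (ha : X ∣ a) (N : ℕ) :
    trunc (N + 1) (pscomp f a) = trunc (N + 1) (∑ k ∈ range (N + 1), coeff k f • a ^ k) := by
  obtain ⟨b, rfl⟩ := ha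
  ext j
  rw [coeff_trunc, coeff_trunc]
  split_ifs with hj
  · simp only [pscomp, coeff_mk, map_sum, coeff_smul, smul_eq_mul]
    refine sum_subset (range_subset_range.2 (by omega)) fun k _ hk => ?_
    rw [mem_range, not_lt] at hk
    rw [mul_pow, coeff_X_pow_mul', if_neg (by omega), mul_zero]
  · rfl

lemma coeff_mul_pscomp_X_sq_mul (u f h : PowerSeries ℚ) (N : ℕ) :
    coeff N (u * pscomp f (X ^ 2 * h)) =
      ∑ k ∈ range (N / 2 + 1), coeff k f * coeff (N - 2 * k) (u * h ^ k) := by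
  have hcoeff : ∀ k, coeff N (u * (coeff k f • (X ^ 2 * h) ^ k)) =
      coeff k f * if 2 * k ≤ N then coeff (N - 2 * k) (u * h ^ k) else 0 := by
    intro k
    rw [mul_smul_comm, coeff_smul, smul_eq_mul, mul_pow, ← pow_mul, mul_left_comm,
      coeff_X_pow_mul']
  rw [← coeff_coe_trunc_of_lt N.lt_succ_self, ← trunc_mul_trunc,
    trunc_pscomp_of_X_dvd f (dvd_mul_of_dvd_left (dvd_pow_self X two_ne_zero) h),
    trunc_mul_trunc, coeff_coe_trunc_of_lt N.lt_succ_self, mul_sum, map_sum]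
  simp only [hcoeff]
  refine (sum_subset_zero_on_sdiff (range_subset_range.2 (by omega)) (fun k hk => ?_)
    fun k hk => ?_).symm
  · rw [mem_sdiff, mem_range, mem_range] at hk
    rw [if_neg (by omega), mul_zero]
  · rw [mem_range] at hk
    rw [if_pos (by omega)]

theorem stmt_9_general (B g : PowerSeries ℚ)
    (hg : g = 1 + X * g * pscomp B (X ^ 2 * g)) :
    ∀ n m : ℕ, 1 ≤ n → 1 ≤ m →
      coeff n (g ^ m) =
        ∑ j ∈ Finset.range ((n - 1) / 2 + 1),
          coeff j B * ∑ i ∈ Finset.Icc (j + 1) (m + j), coeff (n - 1 - 2 * j) (g ^ i) := by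
  intro n m hn _
  obtain ⟨N, rfl⟩ : ∃ N, n = N + 1 := ⟨n - 1, by omega⟩
  have hpow := pow_eq_one_add_mul_sum_pow_of_eq_one_add_mul
    (c := X * pscomp B (X ^ 2 * g)) (by rw [mul_right_comm]; exact hg) m
  rw [hpow, map_add, coeff_one, if_neg N.succ_ne_zero, zero_add, mul_right_comm, mul_assoc,
    coeff_succ_X_mul, coeff_mul_pscomp_X_sq_mul, Nat.add_sub_cancel]
  refine sum_congr rfl fun k _ => ?_
  rw [← Ico_add_one_right_eq_Icc, sum_Ico_eq_sum_range, Nat.add_sub_add_right, Nat.add_sub_cancel,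
    sum_mul, map_sum]
  refine congrArg _ (sum_congr rfl fun i _ => ?_)
  rw [← pow_add, show i + 1 + k = k + 1 + i by omega]

theorem stmt_9 (B g : PowerSeries ℚ) (hg0 : constantCoeff g = 1)
    (hg : g = 1 + X * g * pscomp B (X ^ 2 * g)) :
    ∀ n m : ℕ, 1 ≤ n → 1 ≤ m →
      coeff n (g ^ m) =
        ∑ j ∈ Finset.range ((n - 1) / 2 + 1),
          coeff j B * ∑ i ∈ Finset.Icc (j + 1) (m + j), coeff (n - 1 - 2 * j) (g ^ i) :=
  stmt_9_general B g hg
end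

section
/- Let g(x) with g(0)=1 satisfy g(x) = 1 + x·g(x)·B(x²·g(x)) where B(x) = Σ_{i≥0} b_i xⁱ. Then [x³] g(x)^m = C(m+2,3)·b_0³ + m·b_1, and [x⁴] g(x)^m = C(m+3,4)·b_0⁴ + m(m+2)·b_0·b_1, and [x⁵] g(x)^m = C(m+4,5)·b_0⁵ + m·C(m+3,2)·b_0²·b_1 + m·b_2. -/
open PowerSeries

/-!
Comparing coefficients of `X ^ (n + 1)` in `g = 1 + X g B(X² g)` expresses `[Xⁿ⁺¹] g` through
lower coefficients of `g`. Since `X² g` has order two, `[X^N] B(X² g)` for `N ≤ 4` involves only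
`b₀, b₁, b₂`, so with `a = b₀, b = b₁, c = b₂` one gets
`g ≡ 1 + a X + a² X² + (a³ + b) X³ + (a⁴ + 3ab) X⁴ + (a⁵ + 6a²b + c) X⁵ (mod X⁶)`.
The first coefficients of `g ^ m` follow by induction on `m` from `g ^ (m + 1) = g ^ m * g`; they
are polynomials in `m`, which are the stated binomial coefficients.
-/

open Finset

lemma Nat.cast_choose_eq_descFactorial_div (K : Type*) [Field K] [CharZero K] (n k : ℕ) :
    (n.choose k : K) = n.descFactorial k / k.factorial := by
  rw [Nat.descFactorial_eq_factorial_mul_choose, Nat.cast_mul, mul_div_cancel_left₀]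
  exact_mod_cast k.factorial_ne_zero

lemma PowerSeries.coeff_mul_eq_sum_range {R : Type*} [CommSemiring R] (f h : R⟦X⟧) (n : ℕ) :
    coeff n (f * h) = ∑ i ∈ range (n + 1), coeff i f * coeff (n - i) h := by
  rw [coeff_mul, Nat.sum_antidiagonal_eq_sum_range_succ_mk]

lemma coeff_pscomp_X_sq_mul (f h : ℚ⟦X⟧) (N : ℕ) :
    coeff N (pscomp f (X ^ 2 * h)) =
      ∑ n ∈ range (N + 1), coeff n f * if 2 * n ≤ N then coeff (N - 2 * n) (h ^ n) else 0 := by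
  simp only [pscomp, coeff_mk, mul_pow, ← pow_mul, coeff_X_pow_mul']

lemma coeff_pscomp_X_sq_mul_of_constantCoeff_eq_one (f h : ℚ⟦X⟧) (h0 : constantCoeff h = 1) :
    coeff 0 (pscomp f (X ^ 2 * h)) = coeff 0 f ∧
    coeff 1 (pscomp f (X ^ 2 * h)) = 0 ∧
    coeff 2 (pscomp f (X ^ 2 * h)) = coeff 1 f ∧
    coeff 3 (pscomp f (X ^ 2 * h)) = coeff 1 f * coeff 1 h ∧
    coeff 4 (pscomp f (X ^ 2 * h)) = coeff 1 f * coeff 2 h + coeff 2 f := by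
  simp [coeff_pscomp_X_sq_mul, sum_range_succ, coeff_zero_eq_constantCoeff, h0]

lemma PowerSeries.coeff_succ_of_eq_one_add_X_mul {R : Type*} [CommRing R] {g P : R⟦X⟧}
    (hg : g = 1 + X * g * P) (n : ℕ) : coeff (n + 1) g = coeff n (g * P) := by
  conv_lhs => rw [hg]
  rw [map_add, mul_assoc, coeff_succ_X_mul, coeff_one, if_neg n.succ_ne_zero, zero_add]

lemma coeff_le_five_of_eq_one_add_X_mul_pscomp {B g : ℚ⟦X⟧} (hg0 : constantCoeff g = 1)
    (hg : g = 1 + X * g * pscomp B (X ^ 2 * g)) :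
    coeff 0 g = 1 ∧ coeff 1 g = coeff 0 B ∧ coeff 2 g = coeff 0 B ^ 2 ∧
    coeff 3 g = coeff 0 B ^ 3 + coeff 1 B ∧
    coeff 4 g = coeff 0 B ^ 4 + 3 * coeff 0 B * coeff 1 B ∧
    coeff 5 g = coeff 0 B ^ 5 + 6 * coeff 0 B ^ 2 * coeff 1 B + coeff 2 B := by
  obtain ⟨hP0, hP1, hP2, hP3, hP4⟩ := coeff_pscomp_X_sq_mul_of_constantCoeff_eq_one B g hg0
  have hc0 : coeff 0 g = 1 := by rw [coeff_zero_eq_constantCoeff_apply, hg0]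
  have hrec : ∀ n, coeff (n + 1) g = ∑ i ∈ range (n + 1),
      coeff i g * coeff (n - i) (pscomp B (X ^ 2 * g)) := fun n =>
    (coeff_succ_of_eq_one_add_X_mul hg n).trans (coeff_mul_eq_sum_range _ _ n)
  refine ⟨hc0, ?_, ?_, ?_, ?_, ?_⟩ <;>
    simp [hrec, sum_range_succ, hc0, hP0, hP1, hP2, hP3, hP4] <;> ring

lemma coeff_pow_le_five {g : ℚ⟦X⟧} {a b c : ℚ} (h0 : coeff 0 g = 1) (h1 : coeff 1 g = a)
    (h2 : coeff 2 g = a ^ 2) (h3 : coeff 3 g = a ^ 3 + b) (h4 : coeff 4 g = a ^ 4 + 3 * a * b)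
    (h5 : coeff 5 g = a ^ 5 + 6 * a ^ 2 * b + c) (m : ℕ) :
    coeff 0 (g ^ m) = 1 ∧ coeff 1 (g ^ m) = m * a ∧
    coeff 2 (g ^ m) = m * (m + 1) / 2 * a ^ 2 ∧
    coeff 3 (g ^ m) = m * (m + 1) * (m + 2) / 6 * a ^ 3 + m * b ∧
    coeff 4 (g ^ m) = m * (m + 1) * (m + 2) * (m + 3) / 24 * a ^ 4 + m * (m + 2) * a * b ∧
    coeff 5 (g ^ m) = m * (m + 1) * (m + 2) * (m + 3) * (m + 4) / 120 * a ^ 5 +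
      m * (m + 2) * (m + 3) / 2 * a ^ 2 * b + m * c := by
  induction m with
  | zero => simp
  | succ n ih =>
    obtain ⟨i0, i1, i2, i3, i4, i5⟩ := ih
    refine ⟨?_, ?_, ?_, ?_, ?_, ?_⟩ <;>
    · simp only [pow_succ, coeff_mul_eq_sum_range, sum_range_succ, sum_range_zero]
      norm_num [i0, i1, i2, i3, i4, i5, h0, h1, h2, h3, h4, h5] <;> ring

theorem stmt_10_general (B g : PowerSeries ℚ) (hg0 : constantCoeff g = 1)
    (hg : g = 1 + X * g * pscomp B (X ^ 2 * g)) (m : ℕ) :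
    coeff 3 (g ^ m) =
        (Nat.choose (m + 2) 3 : ℚ) * (coeff 0 B) ^ 3 + m * coeff 1 B ∧
    coeff 4 (g ^ m) =
        (Nat.choose (m + 3) 4 : ℚ) * (coeff 0 B) ^ 4 +
          m * (m + 2) * coeff 0 B * coeff 1 B ∧
    coeff 5 (g ^ m) =
        (Nat.choose (m + 4) 5 : ℚ) * (coeff 0 B) ^ 5 +
          m * (Nat.choose (m + 3) 2 : ℚ) * (coeff 0 B) ^ 2 * coeff 1 B +
          m * coeff 2 B := by
  obtain ⟨h0, h1, h2, h3, h4, h5⟩ := coeff_le_five_of_eq_one_add_X_mul_pscomp hg0 hg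
  obtain ⟨-, -, -, e3, e4, e5⟩ := coeff_pow_le_five h0 h1 h2 h3 h4 h5 m
  simp only [e3, e4, e5, Nat.cast_choose_eq_descFactorial_div, Nat.descFactorial_succ,
    Nat.descFactorial_zero, Nat.factorial]
  push_cast
  refine ⟨by ring, by ring, by ring⟩

theorem stmt_10 (B g : PowerSeries ℚ) (hg0 : constantCoeff g = 1)
    (hg : g = 1 + X * g * pscomp B (X ^ 2 * g)) (m : ℕ) (hm : 1 ≤ m) :
    coeff 3 (g ^ m) =
        (Nat.choose (m + 2) 3 : ℚ) * (coeff 0 B) ^ 3 + m * coeff 1 B ∧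
    coeff 4 (g ^ m) =
        (Nat.choose (m + 3) 4 : ℚ) * (coeff 0 B) ^ 4 +
          m * (m + 2) * coeff 0 B * coeff 1 B ∧
    coeff 5 (g ^ m) =
        (Nat.choose (m + 4) 5 : ℚ) * (coeff 0 B) ^ 5 +
          m * (Nat.choose (m + 3) 2 : ℚ) * (coeff 0 B) ^ 2 * coeff 1 B +
          m * coeff 2 B :=
  stmt_10_general B g hg0 hg m
end

section
/- Let g(x) with g(0)=1 satisfy g(x) = 1 + x·g(x)·B(x²·g(x)) where B(x) = Σ b_i xⁱ. Then for all n ≥ 0 and m ≥ 1: [xⁿ] g(x)^m = Σ over all tuples (m_0,...,m_p) of nonnegative integers with Σ_{i=0}^{p} m_i(2i+1) = n (where p = ⌊(n-1)/2⌋) of [m·(m+k-1)! / (m_0!·m_1!···m_p!·(m+k-q)!)] · b_0^{m_0}·b_1^{m_1}···b_p^{m_p}, where k = Σ m_i(i+1) and q = Σ m_i. -/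
/-!
Multiplying the functional equation by `g ^ m` gives `g^(m+1) = g^m + X g^(m+1) B(X² g)`, so
`[x^(n+1)] g^(m+1) = [x^(n+1)] g^m + ∑ⱼ bⱼ [x^(n-2j)] g^(m+1+j)`; with `[x⁰] g^m = 1` this
determines every `[xⁿ] g^m` by induction on `n` and then on `m`. The closed form obeys the
same recurrence: the monomial `b^f` on the right comes from `b^(f - eⱼ)` for each `j` with
`fⱼ ≥ 1`, and comparing its coefficients reduces to
`(m+1)(m+k) - m(m+k-q+1) = qm + k = ∑ⱼ fⱼ (m+1+j)`.
-/

open PowerSeries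

open Finset

lemma coeff_pow_eq_zero_of_lt {G : PowerSeries ℚ} (hG : constantCoeff G = 0) {b j : ℕ}
    (h : b < j) : coeff b (G ^ j) = 0 :=
  X_pow_dvd_iff.1 (pow_dvd_pow_of_dvd (X_dvd_iff.2 hG) j) b h

lemma coeff_pscomp_eq_sum_range (f : PowerSeries ℚ) {G : PowerSeries ℚ}
    (hG : constantCoeff G = 0) {N M : ℕ} (hNM : N < M) :
    coeff N (pscomp f G) = ∑ j ∈ range M, coeff j f * coeff N (G ^ j) := by
  rw [pscomp, coeff_mk]
  exact (eventually_constant_sum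
    (fun j hj => by rw [coeff_pow_eq_zero_of_lt hG (by omega), mul_zero]) hNM).symm

lemma coeff_mul_pscomp (f h : PowerSeries ℚ) {G : PowerSeries ℚ} (hG : constantCoeff G = 0)
    (N : ℕ) :
    coeff N (h * pscomp f G) = ∑ j ∈ range (N + 1), coeff j f * coeff N (h * G ^ j) := by
  calc coeff N (h * pscomp f G)
      = ∑ p ∈ antidiagonal N, ∑ j ∈ range (N + 1),
          coeff j f * (coeff p.1 h * coeff p.2 (G ^ j)) := by
        rw [coeff_mul]
        refine sum_congr rfl fun p hp => ?_
        rw [coeff_pscomp_eq_sum_range f hG (Nat.antidiagonal.snd_lt hp), mul_sum]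
        exact sum_congr rfl fun j _ => mul_left_comm _ _ _
    _ = _ := by
        rw [sum_comm]
        simp_rw [coeff_mul, mul_sum]

lemma coeff_succ_pow_succ {B g : PowerSeries ℚ} (hg : g = 1 + X * g * pscomp B (X ^ 2 * g))
    (n m : ℕ) :
    coeff (n + 1) (g ^ (m + 1)) = coeff (n + 1) (g ^ m) +
      ∑ j ∈ range (n + 1),
        coeff j B * if 2 * j ≤ n then coeff (n - 2 * j) (g ^ (m + 1 + j)) else 0 := by
  have hG : constantCoeff (X ^ 2 * g : PowerSeries ℚ) = 0 := by simp
  have hpow : g ^ (m + 1) = g ^ m + X * (g ^ (m + 1) * pscomp B (X ^ 2 * g)) :=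
    calc g ^ (m + 1) = g ^ m * g := pow_succ g m
      _ = g ^ m * (1 + X * g * pscomp B (X ^ 2 * g)) := by rw [← hg]
      _ = _ := by ring
  rw [hpow, map_add, coeff_succ_X_mul, coeff_mul_pscomp B _ hG]
  congr 1
  refine sum_congr rfl fun j _ => ?_
  rw [show g ^ (m + 1) * (X ^ 2 * g) ^ j = X ^ (2 * j) * g ^ (m + 1 + j) by ring,
    coeff_X_pow_mul']

section OddParts

variable {D : ℕ}

def oddPartSum (f : Fin D → ℕ) : ℕ := ∑ i, f i * (2 * (i : ℕ) + 1)

def numParts (f : Fin D → ℕ) : ℕ := ∑ i, f i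

def partWeight (f : Fin D → ℕ) : ℕ := ∑ i, f i * ((i : ℕ) + 1)

noncomputable def partFactorials (f : Fin D → ℕ) : ℚ := ∏ i, ((f i).factorial : ℚ)

noncomputable def bMonomial (B : PowerSeries ℚ) (f : Fin D → ℕ) : ℚ :=
  ∏ i : Fin D, (coeff (i : ℕ) B) ^ f i

lemma sum_mul_add_single (f w : Fin D → ℕ) (j : Fin D) :
    ∑ i, (f + Pi.single j 1 : Fin D → ℕ) i * w i = ∑ i, f i * w i + w j := by
  have h : ∀ i, (f + Pi.single j 1 : Fin D → ℕ) i * w i =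
      f i * w i + if i = j then w j else 0 := by
    intro i
    by_cases hij : i = j <;> simp [hij, add_mul]
  simp_rw [h, sum_add_distrib, sum_ite_eq']
  simp

lemma oddPartSum_add_single (f : Fin D → ℕ) (j : Fin D) :
    oddPartSum (f + Pi.single j 1) = oddPartSum f + (2 * j + 1) :=
  sum_mul_add_single f (fun i => 2 * (i : ℕ) + 1) j

lemma partWeight_add_single (f : Fin D → ℕ) (j : Fin D) :
    partWeight (f + Pi.single j 1) = partWeight f + (j + 1) :=
  sum_mul_add_single f (fun i => (i : ℕ) + 1) j

lemma numParts_add_single (f : Fin D → ℕ) (j : Fin D) :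
    numParts (f + Pi.single j 1) = numParts f + 1 := by
  simpa [numParts] using sum_mul_add_single f (fun _ => 1) j

lemma partFactorials_add_single (f : Fin D → ℕ) (j : Fin D) :
    partFactorials (f + Pi.single j 1) = (f j + 1) * partFactorials f := by
  have h : ∀ i, (((f + Pi.single j 1 : Fin D → ℕ) i).factorial : ℚ) =
      (f i).factorial * if i = j then (f j + 1 : ℚ) else 1 := by
    intro i
    by_cases hij : i = j
    · subst hij
      simp [Nat.factorial_succ, mul_comm]
    · simp [hij]
  simp_rw [partFactorials, h, prod_mul_distrib, prod_ite_eq']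
  simp [mul_comm]

lemma bMonomial_add_single (B : PowerSeries ℚ) (f : Fin D → ℕ) (j : Fin D) :
    bMonomial B (f + Pi.single j 1) = coeff (j : ℕ) B * bMonomial B f := by
  have h : ∀ i : Fin D, coeff (i : ℕ) B ^ (f + Pi.single j 1 : Fin D → ℕ) i =
      coeff (i : ℕ) B ^ f i * if i = j then coeff (j : ℕ) B else 1 := by
    intro i
    by_cases hij : i = j
    · subst hij
      simp [pow_succ]
    · simp [hij]
  simp_rw [bMonomial, h, prod_mul_distrib, prod_ite_eq']
  simp [mul_comm]

lemma numParts_le_partWeight (f : Fin D → ℕ) : numParts f ≤ partWeight f :=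
  sum_le_sum fun _ _ => Nat.le_mul_of_pos_right _ (Nat.succ_pos _)

lemma oddPartSum_le_two_mul_partWeight (f : Fin D → ℕ) : oddPartSum f ≤ 2 * partWeight f := by
  rw [partWeight, mul_sum]
  exact sum_le_sum fun _ _ => by nlinarith

lemma le_oddPartSum (f : Fin D → ℕ) (i : Fin D) : f i * (2 * i + 1) ≤ oddPartSum f :=
  single_le_sum (f := fun i : Fin D => f i * (2 * (i : ℕ) + 1)) (fun _ _ => Nat.zero_le _)
    (mem_univ i)

/-- `f i` is the multiplicity of the odd part `2 i + 1`; the bound on the entries only makes the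
set finite. -/
def oddParts (D n : ℕ) : Finset (Fin D → ℕ) :=
  {f ∈ Fintype.piFinset fun _ => range (n + 1) | oddPartSum f = n}

lemma mem_oddParts {n : ℕ} {f : Fin D → ℕ} : f ∈ oddParts D n ↔ oddPartSum f = n := by
  refine ⟨fun h => (mem_filter.1 h).2, fun h => mem_filter.2 ⟨?_, h⟩⟩
  refine Fintype.mem_piFinset.2 fun i => mem_range.2 ?_
  have := le_oddPartSum f i
  nlinarith

lemma oddParts_zero : oddParts D 0 = {0} := by
  ext f
  simp [mem_oddParts, oddPartSum, sum_eq_zero_iff, funext_iff]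

lemma sub_single_add_single {f : Fin D → ℕ} {j : Fin D} (hf : f j ≠ 0) :
    f - Pi.single j 1 + Pi.single j 1 = f := by
  funext i
  by_cases hij : i = j
  · subst hij
    simp only [Pi.add_apply, Pi.sub_apply, Pi.single_eq_same]
    omega
  · simp [hij]

lemma sum_oddParts_eq_ite {M : Type*} [AddCommMonoid M] (n : ℕ) (j : Fin D)
    {F : (Fin D → ℕ) → M} (hF : ∀ f, f j = 0 → F f = 0) :
    ∑ f ∈ oddParts D n, F f =
      if 2 * j + 1 ≤ n then ∑ f ∈ oddParts D (n - (2 * j + 1)), F (f + Pi.single j 1)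
      else 0 := by
  split_ifs with hj
  · rw [← sum_filter_of_ne (p := fun f => f j ≠ 0) fun f _ h hf => h (hF f hf)]
    refine (sum_nbij' (fun f => f + Pi.single j 1) (fun f => f - Pi.single j 1) ?_ ?_ ?_ ?_
      fun _ _ => rfl).symm
    · intro f hf
      simp only [mem_filter, mem_oddParts] at hf ⊢
      exact ⟨by rw [oddPartSum_add_single, hf]; omega, by simp⟩
    · intro f hf
      simp only [mem_filter, mem_oddParts] at hf ⊢
      have := oddPartSum_add_single (f - Pi.single j 1) j
      rw [sub_single_add_single hf.2] at this
      omega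
    · intro f _
      exact add_tsub_cancel_right f _
    · intro f hf
      exact sub_single_add_single (mem_filter.1 hf).2
  · refine sum_eq_zero fun f hf => hF f ?_
    have := le_oddPartSum f j
    rw [mem_oddParts] at hf
    nlinarith

lemma partFactorials_ne_zero (f : Fin D → ℕ) : partFactorials f ≠ 0 :=
  prod_ne_zero_iff.2 fun i _ => Nat.cast_ne_zero.2 (Nat.factorial_ne_zero (f i))

noncomputable def expansionCoeff (m : ℕ) (f : Fin D → ℕ) : ℚ :=
  (m : ℚ) * (m + partWeight f - 1).factorial /
    (partFactorials f * (m + partWeight f - numParts f).factorial)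

noncomputable def incrementCoeff (m : ℕ) (f : Fin D → ℕ) : ℚ :=
  (m + partWeight f - 1).factorial /
    (partFactorials f * (m + 1 + partWeight f - numParts f).factorial)

lemma expansionCoeff_zero_right {m : ℕ} (hm : 1 ≤ m) :
    expansionCoeff m (0 : Fin D → ℕ) = 1 := by
  have hfac : (m : ℚ) * (m - 1).factorial = m.factorial := by
    exact_mod_cast Nat.mul_factorial_pred (by omega)
  simp [expansionCoeff, partWeight, numParts, partFactorials, hfac, Nat.factorial_ne_zero]

lemma expansionCoeff_zero_left (f : Fin D → ℕ) : expansionCoeff 0 f = 0 := by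
  simp [expansionCoeff]

lemma expansionCoeff_succ (m : ℕ) {f : Fin D → ℕ} (hf : 1 ≤ partWeight f) :
    expansionCoeff (m + 1) f =
      expansionCoeff m f + (numParts f * m + partWeight f) * incrementCoeff m f := by
  obtain ⟨s, hs⟩ : ∃ s, partWeight f = numParts f + s :=
    Nat.exists_eq_add_of_le (numParts_le_partWeight f)
  obtain ⟨t, ht⟩ : ∃ t, m + partWeight f = t + 1 := ⟨m + partWeight f - 1, by omega⟩
  have h1 : m + 1 + partWeight f - 1 = t + 1 := by omega
  have h2 : m + 1 + partWeight f - numParts f = m + s + 1 := by omega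
  have h3 : m + partWeight f - numParts f = m + s := by omega
  have h4 : m + partWeight f - 1 = t := by omega
  rw [expansionCoeff, expansionCoeff, incrementCoeff, h1, h2, h3, h4, Nat.factorial_succ t,
    Nat.factorial_succ (m + s)]
  have ht' : (t : ℚ) + 1 = m + numParts f + s := by exact_mod_cast (ht.symm.trans (by omega))
  have hP := partFactorials_ne_zero f
  push_cast
  rw [hs, ht']
  field_simp
  push_cast
  ring

lemma expansionCoeff_eq_incrementCoeff_add_single (m : ℕ) (f : Fin D → ℕ) (j : Fin D) :
    expansionCoeff (m + 1 + j) f =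
      (f j + 1) * (m + 1 + j) * incrementCoeff m (f + Pi.single j 1) := by
  rw [expansionCoeff, incrementCoeff, partWeight_add_single, numParts_add_single,
    partFactorials_add_single]
  have h1 : m + (partWeight f + (j + 1)) - 1 = m + 1 + j + partWeight f - 1 := by omega
  have h2 : m + 1 + (partWeight f + (j + 1)) - (numParts f + 1) =
      m + 1 + j + partWeight f - numParts f := by omega
  rw [h1, h2]
  have : (f j : ℚ) + 1 ≠ 0 := by positivity
  push_cast
  field_simp

lemma expansionCoeff_succ_eq_add_sum (m : ℕ) {f : Fin D → ℕ} (hf : 1 ≤ partWeight f) :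
    expansionCoeff (m + 1) f =
      expansionCoeff m f + ∑ j, f j * (m + 1 + j) * incrementCoeff m f := by
  have hsum : ∑ j : Fin D, f j * (m + 1 + j) = numParts f * m + partWeight f := by
    simp only [numParts, partWeight, sum_mul, ← sum_add_distrib]
    exact sum_congr rfl fun j _ => by ring
  rw [expansionCoeff_succ m hf, ← sum_mul]
  congr 2
  exact_mod_cast hsum.symm

noncomputable def bExpansion (B : PowerSeries ℚ) (D n m : ℕ) : ℚ :=
  ∑ f ∈ oddParts D n, expansionCoeff m f * bMonomial B f

lemma bExpansion_zero_left (B : PowerSeries ℚ) {m : ℕ} (hm : 1 ≤ m) :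
    bExpansion B D 0 m = 1 := by
  simp [bExpansion, oddParts_zero, expansionCoeff_zero_right hm, bMonomial]

lemma bExpansion_zero_right (B : PowerSeries ℚ) (n : ℕ) : bExpansion B D n 0 = 0 := by
  simp [bExpansion, expansionCoeff_zero_left]

lemma bExpansion_succ_succ (B : PowerSeries ℚ) (n m : ℕ) :
    bExpansion B D (n + 1) (m + 1) = bExpansion B D (n + 1) m +
      ∑ j : Fin D, coeff (j : ℕ) B *
        if 2 * (j : ℕ) ≤ n then bExpansion B D (n - 2 * j) (m + 1 + j) else 0 := by
  set T : Fin D → (Fin D → ℕ) → ℚ :=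
    fun j f => f j * (m + 1 + j) * incrementCoeff m f * bMonomial B f
  have hsplit : ∀ f ∈ oddParts D (n + 1), expansionCoeff (m + 1) f * bMonomial B f =
      expansionCoeff m f * bMonomial B f + ∑ j, T j f := by
    intro f hf
    have hk : 1 ≤ partWeight f := by
      have := oddPartSum_le_two_mul_partWeight f
      rw [mem_oddParts.1 hf] at this
      omega
    simp only [T, expansionCoeff_succ_eq_add_sum m hk, add_mul, sum_mul]
  have hshift : ∀ j : Fin D, ∑ f ∈ oddParts D (n + 1), T j f = coeff (j : ℕ) B *
      if 2 * (j : ℕ) ≤ n then bExpansion B D (n - 2 * j) (m + 1 + j) else 0 := by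
    intro j
    rw [sum_oddParts_eq_ite (n + 1) j fun f hf => by simp [T, hf]]
    simp only [Nat.add_le_add_iff_right, Nat.add_sub_add_right]
    split_ifs
    · rw [bExpansion, mul_sum]
      refine sum_congr rfl fun f _ => ?_
      rw [expansionCoeff_eq_incrementCoeff_add_single m f j]
      simp only [T, bMonomial_add_single, Pi.add_apply, Pi.single_eq_same]
      push_cast
      ring
    · rw [mul_zero]
  rw [bExpansion, sum_congr rfl hsplit, sum_add_distrib, sum_comm, ← bExpansion,
    sum_congr rfl fun j _ => hshift j]

end OddParts

lemma sum_range_succ_eq_sum_fin {M : Type*} [AddCommMonoid M] {F : ℕ → M} {n D : ℕ}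
    (hF : ∀ j, n < 2 * j → F j = 0) (hD : n < 2 * D) :
    ∑ j ∈ range (n + 1), F j = ∑ j : Fin D, F j := by
  have hvanish : ∀ j ≥ n / 2 + 1, F j = 0 := fun j hj => hF j (by omega)
  rw [Fin.sum_univ_eq_sum_range, eventually_constant_sum hvanish (n := n + 1) (by omega),
    eventually_constant_sum hvanish (n := D) (by omega)]

theorem coeff_pow_eq_bExpansion {B g : PowerSeries ℚ} (hg0 : constantCoeff g = 1)
    (hg : g = 1 + X * g * pscomp B (X ^ 2 * g)) {D n : ℕ} (hn : n ≤ 2 * D) {m : ℕ}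
    (hm : 1 ≤ m) : coeff n (g ^ m) = bExpansion B D n m := by
  induction n using Nat.strong_induction_on generalizing m with
  | _ n ih =>
  cases n with
  | zero => rw [bExpansion_zero_left B hm, coeff_zero_eq_constantCoeff, map_pow, hg0, one_pow]
  | succ n =>
    clear hm
    induction m with
    | zero => simp [bExpansion_zero_right]
    | succ m ihm =>
      rw [coeff_succ_pow_succ hg, ihm, bExpansion_succ_succ]
      congr 1
      rw [← sum_range_succ_eq_sum_fin (n := n) (D := D)
        (F := fun j =>
          coeff j B * if 2 * j ≤ n then bExpansion B D (n - 2 * j) (m + 1 + j) else 0)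
        (fun j hj => by rw [if_neg (by omega), mul_zero]) (by omega)]
      refine sum_congr rfl fun j _ => ?_
      split_ifs with hj
      · rw [ih (n - 2 * j) (by omega) (by omega) (by omega : 1 ≤ m + 1 + j)]
      · rfl

theorem stmt_11 (B g : PowerSeries ℚ) (hg0 : constantCoeff g = 1)
    (hg : g = 1 + X * g * pscomp B (X ^ 2 * g)) :
    ∀ n m : ℕ, 1 ≤ m →
      coeff n (g ^ m) =
        ∑ f ∈ Finset.filter
            (fun f : Fin ((n - 1) / 2 + 1) → ℕ => ∑ i, f i * (2 * (i : ℕ) + 1) = n)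
            (Fintype.piFinset fun _ => Finset.range (n + 1)),
          (let k := ∑ i, f i * ((i : ℕ) + 1)
           let q := ∑ i, f i
           (m : ℚ) * (m + k - 1).factorial /
             ((∏ i, ((f i).factorial : ℚ)) * (m + k - q).factorial)) *
          ∏ i : Fin ((n - 1) / 2 + 1), (coeff (i : ℕ) B) ^ f i := by
  intro n m hm
  exact coeff_pow_eq_bExpansion hg0 hg (by omega) hm
end

section
/- Let g(x) with g(0)=1 satisfy g(x) = 1 + x·g(x)·(b_0 + b_r·(x²g(x))^r) for constants b_0, b_r and integer r ≥ 1. Then g(x)^m = Σ_{n≥0} (m/(m+rn))·C(m+rn+n-1, n)·b_rⁿ·x^{n(2r+1)}/(1-b_0 x)^{m+n(r+1)}. -/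
/-!
Put `u = (1 - b₀x)⁻¹` and `w = g · (1 - b₀x)`. The functional equation becomes
`w = 1 + T w^(r+1)` with `T = bᵣ x^(2r+1) u^(r+1)`, so `w = 𝓑_{r+1}(T)` and
`g^m = w^m u^m = Σₙ Rₙ Tⁿ u^m`, where `Rₙ` are the Raney numbers
`m/(m+(r+1)n) · C(m+(r+1)n, n) = m/(m+rn) · C(m+rn+n-1, n)`.
The identity `w^(m+1) = w^m + T w^(m+r+1)` mirrors the Pascal-type recurrence of the Raney
numbers, so the expansion of `w^m` holds modulo `X^K` by induction on `K`.
-/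

open PowerSeries Finset
open scoped Nat

-- `[xⁿ] 𝓑_{r+1}(x)^m`; the factorial formula would give the junk value 0 at `m = n = 0`.
noncomputable def raney (r m n : ℕ) : ℚ :=
  if m = 0 ∧ n = 0 then 1 else m * (m + r * n + n - 1)! / (n ! * (m + r * n)!)

theorem raney_zero_succ (r n : ℕ) : raney r 0 (n + 1) = 0 := by
  simp [raney]

theorem raney_zero_right (r m : ℕ) : raney r m 0 = 1 := by
  rcases m with _ | m
  · simp [raney]
  · rw [raney, if_neg (by omega)]
    simp [Nat.factorial_succ, Nat.factorial_ne_zero, Nat.cast_add_one_ne_zero]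

theorem raney_succ_succ (r m n : ℕ) :
    raney r (m + 1) (n + 1) = raney r m (n + 1) + raney r (m + (r + 1)) n := by
  obtain ⟨M, hM⟩ : ∃ M, M = m + r * (n + 1) := ⟨_, rfl⟩
  rw [raney, raney, raney, if_neg (by omega), if_neg (by omega), if_neg (by omega),
    show m + 1 + r * (n + 1) + (n + 1) - 1 = M + n + 1 by omega,
    show m + r * (n + 1) + (n + 1) - 1 = M + n by omega,
    show m + (r + 1) + r * n + n - 1 = M + n by rw [hM]; ring_nf; omega,
    show m + (r + 1) + r * n = M + 1 by rw [hM]; ring,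
    show m + 1 + r * (n + 1) = M + 1 by omega, ← hM]
  simp only [Nat.factorial_succ]
  push_cast
  field_simp
  subst hM
  push_cast
  ring

theorem raney_eq_div_mul_choose (r m n : ℕ) (hm : 0 < m) :
    raney r m n = (m : ℚ) / (m + r * n) * (Nat.choose (m + r * n + n - 1) n : ℚ) := by
  obtain ⟨a, rfl⟩ : ∃ a, m = a + 1 := ⟨m - 1, by omega⟩
  have hsum : a + 1 + r * n + n - 1 = a + r * n + n := by omega
  rw [raney, if_neg (by omega), hsum, Nat.cast_choose ℚ (Nat.le_add_left n _),
    Nat.add_sub_cancel, show a + 1 + r * n = a + r * n + 1 by omega, Nat.factorial_succ]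
  push_cast
  field_simp
  ring

theorem mul_eq_one_add_mul_pow {A : Type*} [CommRing A] {x a b g u : A} {r : ℕ}
    (hu : (1 - a * x) * u = 1) (hg : g = 1 + x * g * (a + b * (x ^ 2 * g) ^ r)) :
    g * (1 - a * x) = 1 + b * x ^ (2 * r + 1) * u ^ (r + 1) * (g * (1 - a * x)) ^ (r + 1) :=
  calc g * (1 - a * x) = 1 + b * x ^ (2 * r + 1) * g ^ (r + 1) := by
        linear_combination hg
    _ = 1 + b * x ^ (2 * r + 1) * g ^ (r + 1) * ((1 - a * x) * u) ^ (r + 1) := by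
        rw [hu, one_pow, mul_one]
    _ = _ := by simp only [mul_pow]; ring

namespace PowerSeries

theorem coeff_eq_of_X_pow_dvd_sub {R : Type*} [CommRing R] {N : ℕ} {p q : R⟦X⟧}
    (h : X ^ (N + 1) ∣ p - q) : coeff N p = coeff N q :=
  sub_eq_zero.mp (by simpa using X_pow_dvd_iff.mp h N N.lt_succ_self)

theorem X_pow_dvd_pow_sub_sum {R : Type*} [CommRing R] {s : ℕ} {c : ℕ → ℕ → R}
    (hc_zero_succ : ∀ n, c 0 (n + 1) = 0) (hc_zero_right : ∀ m, c m 0 = 1)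
    (hc_succ_succ : ∀ m n, c (m + 1) (n + 1) = c m (n + 1) + c (m + s) n)
    {T w : R⟦X⟧} (hT : X ∣ T) (hw : w = 1 + T * w ^ s) (K m : ℕ) :
    X ^ K ∣ w ^ m - ∑ n ∈ range K, C (c m n) * T ^ n := by
  induction K generalizing m with
  | zero => simp
  | succ K ihK =>
    induction m with
    | zero => simp [sum_range_succ', hc_zero_succ, hc_zero_right]
    | succ m ihm =>
      have hpow : w ^ (m + 1) = w ^ m + T * w ^ (m + s) :=
        calc w ^ (m + 1) = w ^ m * (1 + T * w ^ s) := by rw [← hw, pow_succ]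
          _ = _ := by ring
      have hsum : ∑ n ∈ range (K + 1), C (c (m + 1) n) * T ^ n =
          ∑ n ∈ range (K + 1), C (c m n) * T ^ n +
            T * ∑ n ∈ range K, C (c (m + s) n) * T ^ n := by
        rw [sum_range_succ', sum_range_succ' (fun n ↦ C (c m n) * T ^ n), mul_sum]
        have hshift (n : ℕ) : C (c (m + s) n) * T ^ (n + 1) = T * (C (c (m + s) n) * T ^ n) := by
          ring
        simp only [hc_succ_succ, hc_zero_right, map_add, add_mul, sum_add_distrib, hshift]
        ring
      have hTdvd := mul_dvd_mul hT (ihK (m + s))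
      rw [← pow_succ'] at hTdvd
      rw [hpow, hsum]
      convert dvd_add ihm hTdvd using 1
      ring

end PowerSeries

theorem stmt_12_general (b₀ bᵣ : ℚ) (r : ℕ) (g : PowerSeries ℚ)
    (hg : g = 1 + X * g * (C b₀ + C bᵣ * (X ^ 2 * g) ^ r))
    (m : ℕ) (hm : 1 ≤ m) :
    ∀ N : ℕ, coeff N (g ^ m) =
      ∑ n ∈ Finset.range (N + 1),
        ((m : ℚ) / (m + r * n)) * (Nat.choose (m + r * n + n - 1) n : ℚ) * bᵣ ^ n *
          coeff N (X ^ (n * (2 * r + 1)) * ((1 - C b₀ * X)⁻¹) ^ (m + n * (r + 1))) := by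
  intro N
  set u := (1 - C b₀ * X)⁻¹
  set T := C bᵣ * X ^ (2 * r + 1) * u ^ (r + 1)
  have hu : (1 - C b₀ * X) * u = 1 := PowerSeries.mul_inv_cancel _ (by simp)
  have hgm : g ^ m = (g * (1 - C b₀ * X)) ^ m * u ^ m := by
    rw [mul_pow, mul_assoc, ← mul_pow, hu, one_pow, mul_one]
  have hT : X ∣ T := (dvd_pow_self X (by omega)).mul_left _ |>.mul_right _
  have hw : g * (1 - C b₀ * X) = 1 + T * (g * (1 - C b₀ * X)) ^ (r + 1) :=
    mul_eq_one_add_mul_pow hu hg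
  have hexp := X_pow_dvd_pow_sub_sum (raney_zero_succ r) (raney_zero_right r) (raney_succ_succ r)
    hT hw (N + 1) m
  have hdvd := dvd_mul_of_dvd_left hexp (u ^ m)
  rw [sub_mul] at hdvd
  rw [hgm, coeff_eq_of_X_pow_dvd_sub hdvd, sum_mul, map_sum]
  refine sum_congr rfl fun n _ ↦ ?_
  rw [raney_eq_div_mul_choose r m n hm, ← coeff_C_mul]
  congr 1
  simp only [T, mul_pow, ← pow_mul, map_mul, map_pow]
  ring

theorem stmt_12 (b₀ bᵣ : ℚ) (r : ℕ) (hr : 1 ≤ r) (g : PowerSeries ℚ)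
    (hg0 : constantCoeff g = 1)
    (hg : g = 1 + X * g * (C b₀ + C bᵣ * (X ^ 2 * g) ^ r))
    (m : ℕ) (hm : 1 ≤ m) :
    ∀ N : ℕ, coeff N (g ^ m) =
      ∑ n ∈ Finset.range (N + 1),
        ((m : ℚ) / (m + r * n)) * (Nat.choose (m + r * n + n - 1) n : ℚ) * bᵣ ^ n *
          coeff N (X ^ (n * (2 * r + 1)) * ((1 - C b₀ * X)⁻¹) ^ (m + n * (r + 1))) :=
  stmt_12_general b₀ bᵣ r g hg m hm
end

section
/- For positive integers m, m_r, m_s and nonnegative integers r, s, define k = m_r(r+1) + m_s(s+1) and the coefficient F(m) = m·(m+k-1)!/(m_r!·m_s!·(m+k-m_r-m_s)!). Then F satisfies the recursion F(m) = Σ_{i=r+1}^{m+r} F'(i) + Σ_{i=s+1}^{m+s} F''(i), where F' is the analogous coefficient with m_r replaced by m_r - 1 and F'' with m_s replaced by m_s - 1 (a term being 0 if the corresponding exponent becomes negative). -/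
lemma step_aux (r s a b n : ℕ) :
    ((n + 1 : ℕ) : ℚ) * ((n + 1) + ((a+1) * (r + 1) + (b+1) * (s + 1)) - 1).factorial /
        (((a+1).factorial : ℚ) * (b+1).factorial *
          ((n + 1) + ((a+1) * (r + 1) + (b+1) * (s + 1)) - (a+1) - (b+1)).factorial)
      =
    (n : ℚ) * (n + ((a+1) * (r + 1) + (b+1) * (s + 1)) - 1).factorial /
        (((a+1).factorial : ℚ) * (b+1).factorial *
          (n + ((a+1) * (r + 1) + (b+1) * (s + 1)) - (a+1) - (b+1)).factorial)
    + ((n + r + 1 : ℕ) : ℚ) * ((n + r + 1) + (a * (r + 1) + (b+1) * (s + 1)) - 1).factorial /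
        ((a.factorial : ℚ) * (b+1).factorial *
          ((n + r + 1) + (a * (r + 1) + (b+1) * (s + 1)) - a - (b+1)).factorial)
    + ((n + s + 1 : ℕ) : ℚ) * ((n + s + 1) + ((a+1) * (r + 1) + b * (s + 1)) - 1).factorial /
        (((a+1).factorial : ℚ) * b.factorial *
          ((n + s + 1) + ((a+1) * (r + 1) + b * (s + 1)) - (a+1) - b).factorial) := by
  have hK : (a+1) * (r + 1) + (b+1) * (s + 1) = a*r + b*s + a + b + r + s + 2 := by ring
  have hK1 : a * (r + 1) + (b+1) * (s + 1) = a*r + b*s + a + b + s + 1 := by ring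
  have hK2 : (a+1) * (r + 1) + b * (s + 1) = a*r + b*s + a + b + r + 1 := by ring
  rw [hK, hK1, hK2]
  have e : ∀ p q : ℕ,
      (n + 1 + (p + q + a + b + r + s + 2) - 1 = (n + p + q + r + s + a + b + 1) + 1)
    ∧ (n + 1 + (p + q + a + b + r + s + 2) - (a+1) - (b+1) = (n + p + q + r + s) + 1)
    ∧ (n + (p + q + a + b + r + s + 2) - 1 = n + p + q + r + s + a + b + 1)
    ∧ (n + (p + q + a + b + r + s + 2) - (a+1) - (b+1) = n + p + q + r + s)
    ∧ (n + r + 1 + (p + q + a + b + s + 1) - 1 = n + p + q + r + s + a + b + 1)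
    ∧ (n + r + 1 + (p + q + a + b + s + 1) - a - (b+1) = (n + p + q + r + s) + 1)
    ∧ (n + s + 1 + (p + q + a + b + r + 1) - 1 = n + p + q + r + s + a + b + 1)
    ∧ (n + s + 1 + (p + q + a + b + r + 1) - (a+1) - b = (n + p + q + r + s) + 1) := by
    intro p q; omega
  obtain ⟨e1, e2, e3, e4, e5, e6, e7, e8⟩ := e (a*r) (b*s)
  rw [e1, e2, e3, e4, e5, e6, e7, e8]
  rw [Nat.factorial_succ (n + a*r + b*s + r + s + a + b + 1),
    Nat.factorial_succ (n + a*r + b*s + r + s),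
    Nat.factorial_succ a, Nat.factorial_succ b]
  have fx : ((n + a*r + b*s + r + s + a + b + 1).factorial : ℚ) ≠ 0 := by
    exact_mod_cast (Nat.factorial_pos _).ne'
  have fy : ((n + a*r + b*s + r + s).factorial : ℚ) ≠ 0 := by
    exact_mod_cast (Nat.factorial_pos _).ne'
  have fa : ((a.factorial : ℚ)) ≠ 0 := by exact_mod_cast (Nat.factorial_pos _).ne'
  have fb : ((b.factorial : ℚ)) ≠ 0 := by exact_mod_cast (Nat.factorial_pos _).ne'
  push_cast
  have h1 : ((n : ℚ) + a*r + b*s + r + s + 1) ≠ 0 := by positivity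
  have h2 : ((a : ℚ) + 1) ≠ 0 := by positivity
  have h3 : ((b : ℚ) + 1) ≠ 0 := by positivity
  field_simp
  ring

theorem stmt_16 (r s : ℕ) (m mr ms : ℕ) (hm : 1 ≤ m) (hmr : 1 ≤ mr) (hms : 1 ≤ ms)
    (F : ℕ → ℕ → ℕ → ℚ)
    (hF : ∀ M a b : ℕ, F M a b =
      (M : ℚ) * (M + (a * (r + 1) + b * (s + 1)) - 1).factorial /
        ((a.factorial : ℚ) * b.factorial *
          (M + (a * (r + 1) + b * (s + 1)) - a - b).factorial)) :
    F m mr ms =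
      (∑ i ∈ Finset.Icc (r + 1) (m + r), F i (mr - 1) ms) +
      (∑ i ∈ Finset.Icc (s + 1) (m + s), F i mr (ms - 1)) := by
  obtain ⟨a, rfl⟩ : ∃ a, mr = a + 1 := ⟨mr - 1, by omega⟩
  obtain ⟨b, rfl⟩ : ∃ b, ms = b + 1 := ⟨ms - 1, by omega⟩
  simp only [Nat.add_sub_cancel]
  have key : ∀ n : ℕ, F (n + 1) (a + 1) (b + 1)
      = F n (a + 1) (b + 1) + F (n + r + 1) a (b + 1) + F (n + s + 1) (a + 1) b := by
    intro n
    rw [hF, hF, hF, hF]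
    exact step_aux r s a b n
  have h0 : F 0 (a + 1) (b + 1) = 0 := by rw [hF]; simp
  induction m, hm using Nat.le_induction with
  | base =>
    rw [show 1 + r = r + 1 by omega, show 1 + s = s + 1 by omega,
      Finset.Icc_self, Finset.Icc_self, Finset.sum_singleton, Finset.sum_singleton]
    have h := key 0
    simp only [zero_add] at h
    rw [h, h0, zero_add]
  | succ m hm ih =>
    rw [show m + 1 + r = (m + r) + 1 by omega, show m + 1 + s = (m + s) + 1 by omega,
      Finset.sum_Icc_succ_top (by omega), Finset.sum_Icc_succ_top (by omega), key m, ih]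
    ring
end

section
/- Let g(x) with g(0)=1, and let A(x) be the power series such that g(x) = A(x·g(x)) (the A-sequence generating function). Write a_i = [xⁱ]A(x) with a_0 = 1. Then for n ≥ 1, m ≥ 1: [xⁿ]g(x)^m = Σ over tuples (m_1,...,m_n) of nonnegative integers with Σ i·m_i = n of [m·(m+n)_q / ((m+n)·m_1!·m_2!···m_n!)]·a_1^{m_1}···a_n^{m_n}, where q = Σ m_i and (m+n)_q = (m+n)(m+n-1)···(m+n-q+1). -/
/-!
Lagrange inversion in the form `(p + k) [xᵖ] gᵏ = k [xᵖ] Aᵖ⁺ᵏ` follows by strong induction on `p`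
from `gᵏ = Σⱼ [xʲ]Aᵏ · xʲ gʲ`: multiplying by `p`, the induction hypothesis turns the right-hand
side into `[xᵖ] (θ(Aᵏ) · Aᵖ)`, where `θ = x d/dx`, and the Leibniz rule gives
`(p + k) θ(Aᵏ) Aᵖ = k θ(Aᵖ⁺ᵏ)`. The coefficient `[xⁿ] Aᴹ` is then expanded by the binomial
theorem in `a₀ + (A - a₀)` and the multinomial theorem in the monomials `aᵢ₊₁ xⁱ⁺¹`, `i < n`; the
factor `M (M-1)⋯(M-q+1) / (m₁! ⋯ mₙ!)` is `(M choose q)` times the multinomial coefficient.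
-/

open PowerSeries Finset

theorem Derivation.add_nsmul_map_pow_mul_pow {R A : Type*} [CommSemiring R] [CommSemiring A]
    [Algebra R A] (D : Derivation R A A) (x : A) (a b : ℕ) :
    (a + b) • (D (x ^ a) * x ^ b) = a • D (x ^ (a + b)) := by
  rcases Nat.eq_zero_or_pos a with rfl | ha
  · simp
  · rw [D.leibniz_pow, D.leibniz_pow, show a + b - 1 = a - 1 + b by omega, pow_add]
    simp only [smul_eq_mul, nsmul_eq_mul]
    ring

theorem Nat.cast_descFactorial_eq_div {K : Type*} [Field K] [CharZero K] {N q : ℕ} (hq : q ≤ N) :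
    (N.descFactorial q : K) = N.factorial / (N - q).factorial := by
  rw [eq_div_iff (Nat.cast_ne_zero.2 (Nat.factorial_ne_zero _)), ← Nat.cast_mul, mul_comm,
    Nat.factorial_mul_descFactorial hq]

namespace PowerSeries

variable {R : Type*}

section Substitution

variable [CommRing R]

theorem coeff_pow_eq_zero_of_lt {h : R⟦X⟧} (h0 : constantCoeff h = 0) {N d : ℕ} (hlt : N < d) :
    coeff N (h ^ d) = 0 :=
  X_pow_dvd_iff.1 (pow_dvd_pow_of_dvd (X_dvd_iff.2 h0) d) N hlt

theorem coeff_subst_eq_sum {h : R⟦X⟧} (h0 : constantCoeff h = 0) (f : R⟦X⟧) (N : ℕ) :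
    coeff N (f.subst h) = ∑ d ∈ range (N + 1), coeff d f * coeff N (h ^ d) := by
  rw [coeff_subst' (HasSubst.of_constantCoeff_zero' h0), finsum_eq_sum_of_support_subset]
  · rfl
  · intro d hd
    by_contra hdN
    simp only [coe_range, Set.mem_Iio, not_lt] at hdN
    simp [coeff_pow_eq_zero_of_lt h0 hdN] at hd

theorem pscomp_eq_subst (f h : ℚ⟦X⟧) (h0 : constantCoeff h = 0) : pscomp f h = f.subst h := by
  ext N
  simp [pscomp, coeff_subst_eq_sum h0]

end Substitution

section Euler

variable [CommRing R]

variable (R) in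
noncomputable def eulerDerivation : Derivation R R⟦X⟧ R⟦X⟧ :=
  (X : R⟦X⟧) • derivative R

theorem coeff_eulerDerivation (f : R⟦X⟧) (n : ℕ) :
    coeff n (eulerDerivation R f) = n * coeff n f := by
  rcases n with _ | n
  · simp [eulerDerivation]
  · simp [eulerDerivation, coeff_derivative, mul_comm]

theorem coeff_eulerDerivation_mul (u v : R⟦X⟧) (p : ℕ) :
    coeff p (eulerDerivation R u * v) = ∑ j ∈ range (p + 1), j * coeff j u * coeff (p - j) v := by
  rw [coeff_mul, Nat.sum_antidiagonal_eq_sum_range_succ_mk]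
  simp only [coeff_eulerDerivation]

end Euler

section Lagrange

variable [CommRing R] {g A : R⟦X⟧}

theorem coeff_pow_eq_sum_of_eq_subst (hA : g = A.subst (X * g)) (p k : ℕ) :
    coeff p (g ^ k) = ∑ j ∈ range (p + 1), coeff j (A ^ k) * coeff (p - j) (g ^ j) := by
  have h0 : constantCoeff (X * g) = 0 := by simp
  rw [hA, ← subst_pow (HasSubst.of_constantCoeff_zero' h0), ← hA, coeff_subst_eq_sum h0]
  refine sum_congr rfl fun j hj => ?_
  rw [mul_pow, coeff_X_pow_mul', if_pos (Nat.lt_succ_iff.1 (mem_range.1 hj))]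

theorem lagrange_inversion [IsDomain R] [CharZero R] (hA : g = A.subst (X * g)) (p k : ℕ) :
    (p + k) * coeff p (g ^ k) = k * coeff p (A ^ (p + k)) := by
  induction p using Nat.strong_induction_on generalizing k with
  | _ p IH =>
  rcases Nat.eq_zero_or_pos p with rfl | hp
  · simp [coeff_pow_eq_sum_of_eq_subst hA 0 k]
  have hstep : ∀ j ∈ range (p + 1),
      (p : R) * coeff (p - j) (g ^ j) = j * coeff (p - j) (A ^ p) := by
    intro j hj
    rcases Nat.eq_zero_or_pos j with rfl | hj0
    · simp [coeff_one, hp.ne']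
    · have hjp : j ≤ p := Nat.lt_succ_iff.1 (mem_range.1 hj)
      simpa [Nat.cast_sub hjp, Nat.sub_add_cancel hjp] using IH (p - j) (by omega) j
  have hg : (p : R) * coeff p (g ^ k) = coeff p (eulerDerivation R (A ^ k) * A ^ p) := by
    rw [coeff_pow_eq_sum_of_eq_subst hA, mul_sum, coeff_eulerDerivation_mul]
    refine sum_congr rfl fun j hj => ?_
    rw [mul_left_comm, hstep j hj]
    ring
  have hA' : (p : R) * coeff p (A ^ (p + k)) = coeff p (eulerDerivation R (A ^ (k + p))) := by
    rw [coeff_eulerDerivation, add_comm]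
  have hleibniz := congrArg (coeff p) ((eulerDerivation R).add_nsmul_map_pow_mul_pow A k p)
  rw [map_nsmul, map_nsmul] at hleibniz
  simp only [nsmul_eq_mul] at hleibniz
  push_cast at hleibniz
  apply mul_left_cancel₀ (Nat.cast_ne_zero.2 hp.ne' : (p : R) ≠ 0)
  linear_combination (k + p : R) * hg - k * hA' + hleibniz

end Lagrange

section Multinomial

theorem coeff_pow_eq_of_coeff_eq [CommSemiring R] {u v : R⟦X⟧} {n : ℕ}
    (h : ∀ j ≤ n, coeff j u = coeff j v) (M : ℕ) : coeff n (u ^ M) = coeff n (v ^ M) := by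
  have htrunc : trunc (n + 1) u = trunc (n + 1) v := by
    ext j
    simp only [coeff_trunc]
    split_ifs with hj
    exacts [h j (Nat.lt_succ_iff.1 hj), rfl]
  have hcoeff (w : R⟦X⟧) : coeff n w = (trunc (n + 1) w).coeff n := by
    rw [coeff_trunc, if_pos n.lt_succ_self]
  rw [hcoeff, ← trunc_trunc_pow, htrunc, trunc_trunc_pow, ← hcoeff]

theorem coeff_pow_sum_monomial [CommSemiring R] {ι : Type*} [DecidableEq ι] (s : Finset ι)
    (w : ι → ℕ) (c : ι → R) (q N : ℕ) :
    coeff N ((∑ i ∈ s, monomial (w i) (c i)) ^ q) =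
      ∑ k ∈ (piAntidiag s q).filter (fun k => ∑ i ∈ s, w i * k i = N),
        Nat.multinomial s k * ∏ i ∈ s, c i ^ k i := by
  rw [sum_pow_eq_sum_piAntidiag, map_sum, sum_filter]
  refine sum_congr rfl fun k _ => ?_
  simp only [monomial_pow, prod_monomial, ← map_natCast (C (R := R)), coeff_C_mul,
    coeff_monomial, mul_comm (k _)]
  split_ifs <;> simp_all [eq_comm]

/-- The multiplicity vectors `(m₁, …, mₙ)` of the partitions of `n`, with `mᵢ` stored at
index `i - 1`. -/
def multiplicityVectors (n : ℕ) : Finset (Fin n → ℕ) :=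
  Finset.filter (fun f : Fin n → ℕ => ∑ i : Fin n, ((i : ℕ) + 1) * f i = n)
    (Fintype.piFinset fun _ => Finset.range (n + 1))

theorem mem_multiplicityVectors {n : ℕ} {f : Fin n → ℕ} :
    f ∈ multiplicityVectors n ↔ ∑ i : Fin n, ((i : ℕ) + 1) * f i = n := by
  refine ⟨fun hf => (mem_filter.1 hf).2, fun hf => mem_filter.2 ⟨?_, hf⟩⟩
  refine Fintype.mem_piFinset.2 fun i => mem_range.2 (Nat.lt_succ_of_le ?_)
  calc f i ≤ ((i : ℕ) + 1) * f i := Nat.le_mul_of_pos_left _ i.succ_pos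
    _ ≤ ∑ j : Fin n, ((j : ℕ) + 1) * f j :=
      single_le_sum (f := fun j : Fin n => ((j : ℕ) + 1) * f j) (fun _ _ => Nat.zero_le _)
        (mem_univ i)
    _ = n := hf

theorem sum_le_of_mem_multiplicityVectors {n : ℕ} {f : Fin n → ℕ}
    (hf : f ∈ multiplicityVectors n) : ∑ i, f i ≤ n :=
  calc ∑ i, f i ≤ ∑ i : Fin n, ((i : ℕ) + 1) * f i :=
        sum_le_sum fun i _ => Nat.le_mul_of_pos_left _ i.succ_pos
    _ = n := mem_multiplicityVectors.1 hf

theorem filter_piAntidiag_univ_eq (n q : ℕ) :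
    (piAntidiag univ q).filter (fun f : Fin n → ℕ => ∑ i : Fin n, ((i : ℕ) + 1) * f i = n) =
      (multiplicityVectors n).filter (fun f => ∑ i, f i = q) := by
  ext f
  simp [mem_multiplicityVectors, and_comm]

theorem choose_mul_multinomial [Field R] [CharZero R] {ι : Type*} [DecidableEq ι]
    (s : Finset ι) (k : ι → ℕ) (M : ℕ) :
    (M.choose (∑ i ∈ s, k i) * Nat.multinomial s k : R) =
      M.descFactorial (∑ i ∈ s, k i) / ∏ i ∈ s, ((k i).factorial : R) := by
  have hprod : ∏ i ∈ s, ((k i).factorial : R) ≠ 0 :=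
    prod_ne_zero_iff.2 fun i _ => Nat.cast_ne_zero.2 (Nat.factorial_ne_zero _)
  rw [eq_div_iff hprod, Nat.descFactorial_eq_factorial_mul_choose, ← Nat.multinomial_spec s k]
  push_cast
  ring

theorem coeff_pow_eq_sum_multiplicityVectors [Field R] [CharZero R] (A : R⟦X⟧) (n M : ℕ) :
    coeff n (A ^ M) = ∑ f ∈ multiplicityVectors n,
      M.descFactorial (∑ i, f i) / (∏ i, ((f i).factorial : R)) *
        coeff 0 A ^ (M - ∑ i, f i) * ∏ i : Fin n, coeff ((i : ℕ) + 1) A ^ f i := by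
  set B : R⟦X⟧ := ∑ i : Fin n, monomial ((i : ℕ) + 1) (coeff ((i : ℕ) + 1) A)
  have hA : ∀ j ≤ n, coeff j A = coeff j (B + C (coeff 0 A)) := by
    intro j hj
    rcases j with _ | j
    · simp only [B, map_add, map_sum, coeff_monomial, coeff_C]
      simp
    · simp only [B, map_add, map_sum, coeff_monomial, coeff_C, if_neg j.succ_ne_zero, add_zero]
      rw [sum_eq_single_of_mem ⟨j, hj⟩ (mem_univ _) fun i _ hi => if_neg ?_, if_pos rfl]
      exact fun h => hi (Fin.ext (by simpa using h.symm))
  have hfiber (q : ℕ) : coeff n (B ^ q * C (coeff 0 A) ^ (M - q) * (M.choose q : R⟦X⟧)) =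
      ∑ f ∈ (multiplicityVectors n).filter (fun f => ∑ i, f i = q),
        M.descFactorial (∑ i, f i) / (∏ i, ((f i).factorial : R)) *
          coeff 0 A ^ (M - ∑ i, f i) * ∏ i : Fin n, coeff ((i : ℕ) + 1) A ^ f i := by
    rw [← map_pow, ← map_natCast C, mul_assoc, ← map_mul, coeff_mul_C, coeff_pow_sum_monomial,
      filter_piAntidiag_univ_eq, sum_mul]
    refine sum_congr rfl fun f hf => ?_
    obtain ⟨-, rfl⟩ := mem_filter.1 hf
    rw [← choose_mul_multinomial]
    ring
  rw [coeff_pow_eq_of_coeff_eq hA, add_pow, map_sum, sum_congr rfl fun q _ => hfiber q,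
    sum_fiberwise_eq_sum_filter, sum_filter_of_ne]
  intro f _ hf
  by_contra hfM
  simp [Nat.descFactorial_eq_zero_iff_lt.2 (by simpa using hfM)] at hf

end Multinomial

end PowerSeries

theorem stmt_17_general (g A : PowerSeries ℚ)
    (hA0 : constantCoeff A = 1) (hA : g = pscomp A (X * g)) :
    ∀ n m : ℕ, 1 ≤ n → 1 ≤ m →
      coeff n (g ^ m) =
        ∑ f ∈ Finset.filter (fun f : Fin n → ℕ => ∑ i : Fin n, ((i : ℕ) + 1) * f i = n)
            (Fintype.piFinset fun _ => Finset.range (n + 1)),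
          (let q := ∑ i, f i
           (m : ℚ) * (m + n - 1).factorial /
             ((∏ i, ((f i).factorial : ℚ)) * (m + n - q).factorial)) *
          ∏ i : Fin n, (coeff ((i : ℕ) + 1) A) ^ f i := by
  intro n m hn hm
  rw [pscomp_eq_subst _ _ (by simp)] at hA
  have hlagrange := lagrange_inversion hA n m
  rw [coeff_pow_eq_sum_multiplicityVectors A, coeff_zero_eq_constantCoeff_apply, hA0] at hlagrange
  have hnm : ((n : ℚ) + m) ≠ 0 := by positivity
  rw [← mul_right_inj' hnm, hlagrange, mul_sum, mul_sum]
  refine sum_congr rfl fun f hf => ?_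
  have hq := sum_le_of_mem_multiplicityVectors hf
  rw [Nat.cast_descFactorial_eq_div (by omega), add_comm n m, ← Nat.mul_factorial_pred (by omega)]
  have := Nat.factorial_ne_zero (m + n - ∑ i, f i)
  have : ∏ i, ((f i).factorial : ℚ) ≠ 0 :=
    prod_ne_zero_iff.2 fun i _ => Nat.cast_ne_zero.2 (Nat.factorial_ne_zero _)
  push_cast
  field_simp
  ring

theorem stmt_17 (g A : PowerSeries ℚ) (hg0 : constantCoeff g = 1)
    (hA0 : constantCoeff A = 1) (hA : g = pscomp A (X * g)) :
    ∀ n m : ℕ, 1 ≤ n → 1 ≤ m →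
      coeff n (g ^ m) =
        ∑ f ∈ Finset.filter (fun f : Fin n → ℕ => ∑ i : Fin n, ((i : ℕ) + 1) * f i = n)
            (Fintype.piFinset fun _ => Finset.range (n + 1)),
          (let q := ∑ i, f i
           (m : ℚ) * (m + n - 1).factorial /
             ((∏ i, ((f i).factorial : ℚ)) * (m + n - q).factorial)) *
          ∏ i : Fin n, (coeff ((i : ℕ) + 1) A) ^ f i :=
  stmt_17_general g A hA0 hA
end
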